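/- arXiv:2407.12762 — 8 statements merged into one kernel-verified Lean document; each statement's English description precedes it below -/
import Mathlib

section
/- Let G = (U, V, E) be a weighted bipartite graph with second singular value at most λ, let B ⊆ U have stationary measure δ, and let T be the set of vertices v ∈ V such that the fraction of neighbors of v (under the conditional edge distribution) lying in B deviates from δ by more than ε. Then the stationary measure of T is at most λ²·δ/ε². -/
/-!
Let `P` be the averaging operator from functions on `U` to functions on `V` along the edge
distribution, and `f = 1_B - δ`, which has mean zero and variance `δ - δ² ≤ δ`. The deviation
at `v` is `(P f) v`, and `⟨f, P f⟩` over the edges is `‖P f‖²`. Because the edge pairing of a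
mean-zero `f` with a constant vanishes, the singular value bound applies to `P f` without
centering it, giving `‖P f‖⁴ ≤ λ² ‖f‖² ‖P f‖²`, i.e. `‖P f‖² ≤ λ² δ`. Chebyshev's inequality
then bounds the measure of `T` by `‖P f‖² / ε²`.
-/

open Finset

section WeightedMoments

variable {ι : Type*} [Fintype ι] {w : ι → ℝ}

lemma sum_mul_sub_mean (hw : ∑ i, w i = 1) (g : ι → ℝ) :
    ∑ i, w i * (g i - ∑ j, w j * g j) = 0 := by
  simp only [mul_sub, sum_sub_distrib, ← sum_mul, hw, one_mul, sub_self]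

lemma sum_mul_sub_mean_sq (hw : ∑ i, w i = 1) (g : ι → ℝ) :
    ∑ i, w i * (g i - ∑ j, w j * g j) ^ 2 = ∑ i, w i * g i ^ 2 - (∑ j, w j * g j) ^ 2 := by
  set c := ∑ j, w j * g j
  have hexpand : ∀ i, w i * (g i - c) ^ 2 = w i * g i ^ 2 - 2 * c * (w i * g i) + c ^ 2 * w i :=
    fun i => by ring
  simp only [hexpand, sum_add_distrib, sum_sub_distrib, ← mul_sum, hw]
  ring

lemma sum_mul_indicator_sub [DecidableEq ι] (B : Finset ι) {δ : ℝ} (hw : ∑ i, w i = 1)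
    (hB : ∑ i ∈ B, w i = δ) :
    ∑ i, w i * ((if i ∈ B then 1 else 0) - δ) = 0 := by
  simp only [mul_sub, mul_ite, mul_one, mul_zero, sum_sub_distrib, sum_ite_mem, univ_inter,
    ← sum_mul, hw, hB, one_mul, sub_self]

lemma sum_mul_indicator_sub_sq [DecidableEq ι] (B : Finset ι) {δ : ℝ} (hw : ∑ i, w i = 1)
    (hB : ∑ i ∈ B, w i = δ) :
    ∑ i, w i * ((if i ∈ B then 1 else 0) - δ) ^ 2 = δ - δ ^ 2 := by
  have hexpand : ∀ i, w i * ((if i ∈ B then 1 else 0) - δ) ^ 2 =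
      (if i ∈ B then w i else 0) * (1 - 2 * δ) + δ ^ 2 * w i := by
    intro i; split_ifs <;> ring
  simp only [hexpand, sum_add_distrib, ← sum_mul, ← mul_sum, sum_ite_mem, univ_inter, hw, hB]
  ring

lemma sq_mul_sum_filter_le {e : ι → ℝ} (hw : ∀ i, 0 ≤ w i) {ε : ℝ} (hε : 0 ≤ ε) :
    ε ^ 2 * ∑ i ∈ univ.filter (fun i => ε < |e i|), w i ≤ ∑ i, w i * e i ^ 2 := by
  rw [mul_sum]
  calc ∑ i ∈ univ.filter (fun i => ε < |e i|), ε ^ 2 * w i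
      ≤ ∑ i ∈ univ.filter (fun i => ε < |e i|), w i * e i ^ 2 := by
        refine sum_le_sum fun i hi => ?_
        have hεe : ε ^ 2 ≤ e i ^ 2 := by
          simpa only [sq_abs] using pow_le_pow_left₀ hε (mem_filter.1 hi).2.le 2
        nlinarith [hw i]
    _ ≤ ∑ i, w i * e i ^ 2 :=
        sum_le_univ_sum_of_nonneg fun i => mul_nonneg (hw i) (sq_nonneg _)

end WeightedMoments

section Bipartite

variable {U V : Type*}

def leftMarginal [Fintype V] (p : U → V → ℝ) (u : U) : ℝ := ∑ v, p u v

def rightMarginal [Fintype U] (p : U → V → ℝ) (v : V) : ℝ := ∑ u, p u v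

lemma rightMarginal_mul_div_sub [Fintype U] [DecidableEq U] {p : U → V → ℝ}
    (hp : ∀ u v, 0 ≤ p u v) (B : Finset U) (δ : ℝ) (v : V) :
    rightMarginal p v * ((∑ u ∈ B, p u v) / rightMarginal p v - δ) =
      ∑ u, p u v * ((if u ∈ B then 1 else 0) - δ) := by
  have hexpand : ∑ u, p u v * ((if u ∈ B then 1 else 0) - δ) =
      ∑ u ∈ B, p u v - rightMarginal p v * δ := by
    simp only [mul_sub, mul_ite, mul_one, mul_zero, sum_sub_distrib, sum_ite_mem, univ_inter,
      ← sum_mul, rightMarginal]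
  by_cases hν : rightMarginal p v = 0
  · have hzero : ∀ u, p u v = 0 := fun u =>
      (sum_eq_zero_iff_of_nonneg fun u _ => hp u v).1 hν u (mem_univ u)
    simp [hν, hzero]
  · rw [hexpand, mul_sub, mul_div_cancel₀ _ hν]

variable [Fintype U] [Fintype V]

def SecondSingularValueLE (p : U → V → ℝ) (lam : ℝ) : Prop :=
  ∀ f : U → ℝ, ∀ g : V → ℝ,
    ∑ u, leftMarginal p u * f u = 0 → ∑ v, rightMarginal p v * g v = 0 →
      |∑ u, ∑ v, p u v * f u * g v| ≤
        lam * √(∑ u, leftMarginal p u * f u ^ 2) * √(∑ v, rightMarginal p v * g v ^ 2)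

variable {p : U → V → ℝ}

lemma sum_rightMarginal (hsum : ∑ u, ∑ v, p u v = 1) : ∑ v, rightMarginal p v = 1 := by
  rw [← hsum]; exact sum_comm

lemma sum_sum_mul_add_const (f : U → ℝ) (g : V → ℝ) (c : ℝ) :
    ∑ u, ∑ v, p u v * f u * (g v + c) =
      ∑ u, ∑ v, p u v * f u * g v + c * ∑ u, leftMarginal p u * f u := by
  simp only [mul_add, sum_add_distrib, mul_sum, leftMarginal, sum_mul]
  congr 1
  exact sum_congr rfl fun u _ => sum_congr rfl fun v _ => by ring

/-- Pairing a mean-zero `f` with a constant gives zero, so the bound extends to any `g` by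
centering it, which only lowers its variance. -/
lemma SecondSingularValueLE.sq_sum_le {lam : ℝ} (hsv : SecondSingularValueLE p lam)
    (hp : ∀ u v, 0 ≤ p u v) (hsum : ∑ u, ∑ v, p u v = 1) {f : U → ℝ}
    (hf : ∑ u, leftMarginal p u * f u = 0) (g : V → ℝ) :
    (∑ u, ∑ v, p u v * f u * g v) ^ 2 ≤
      lam ^ 2 * (∑ u, leftMarginal p u * f u ^ 2) * ∑ v, rightMarginal p v * g v ^ 2 := by
  set c := ∑ v, rightMarginal p v * g v
  have hν := sum_rightMarginal hsum
  have hbound := hsv f (fun v => g v - c) hf (sum_mul_sub_mean hν g)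
  rw [show ∑ u, ∑ v, p u v * f u * (g v - c) = ∑ u, ∑ v, p u v * f u * g v by
    simpa only [sub_eq_add_neg, hf, mul_zero, add_zero] using
      sum_sum_mul_add_const (p := p) f g (-c)]
    at hbound
  have hA : 0 ≤ ∑ u, leftMarginal p u * f u ^ 2 :=
    sum_nonneg fun u _ => mul_nonneg (sum_nonneg fun v _ => hp u v) (sq_nonneg _)
  have hB : 0 ≤ ∑ v, rightMarginal p v * (g v - c) ^ 2 :=
    sum_nonneg fun v _ => mul_nonneg (sum_nonneg fun u _ => hp u v) (sq_nonneg _)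
  calc (∑ u, ∑ v, p u v * f u * g v) ^ 2
      ≤ (lam * √(∑ u, leftMarginal p u * f u ^ 2) *
          √(∑ v, rightMarginal p v * (g v - c) ^ 2)) ^ 2 := by
        simpa only [sq_abs] using pow_le_pow_left₀ (abs_nonneg _) hbound 2
    _ = lam ^ 2 * (∑ u, leftMarginal p u * f u ^ 2) *
          ((∑ v, rightMarginal p v * g v ^ 2) - c ^ 2) := by
        rw [mul_pow, mul_pow, Real.sq_sqrt hA, Real.sq_sqrt hB, sum_mul_sub_mean_sq hν]
    _ ≤ lam ^ 2 * (∑ u, leftMarginal p u * f u ^ 2) * ∑ v, rightMarginal p v * g v ^ 2 := by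
        gcongr
        exact sub_le_self _ (sq_nonneg c)

/-- Pairing `f` with its average `e` along the edges gives exactly the energy `S` of `e`, so
`sq_sum_le` reads `S² ≤ λ² ‖f‖² S`. -/
lemma SecondSingularValueLE.sum_rightMarginal_mul_sq_le {lam : ℝ}
    (hsv : SecondSingularValueLE p lam) (hp : ∀ u v, 0 ≤ p u v) (hsum : ∑ u, ∑ v, p u v = 1)
    {f : U → ℝ} (hf : ∑ u, leftMarginal p u * f u = 0) {e : V → ℝ}
    (he : ∀ v, rightMarginal p v * e v = ∑ u, p u v * f u) :
    ∑ v, rightMarginal p v * e v ^ 2 ≤ lam ^ 2 * ∑ u, leftMarginal p u * f u ^ 2 := by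
  set S := ∑ v, rightMarginal p v * e v ^ 2
  have hpair : ∑ u, ∑ v, p u v * f u * e v = S := by
    rw [sum_comm]
    exact sum_congr rfl fun v _ => by rw [← sum_mul, ← he]; ring
  have hS : 0 ≤ S :=
    sum_nonneg fun v _ => mul_nonneg (sum_nonneg fun u _ => hp u v) (sq_nonneg _)
  have hA : 0 ≤ ∑ u, leftMarginal p u * f u ^ 2 :=
    sum_nonneg fun u _ => mul_nonneg (sum_nonneg fun v _ => hp u v) (sq_nonneg _)
  have hsq : S * S ≤ (lam ^ 2 * ∑ u, leftMarginal p u * f u ^ 2) * S := by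
    simpa only [hpair, sq S] using hsv.sq_sum_le hp hsum hf e
  rcases hS.eq_or_lt with hS0 | hSpos
  · rw [← hS0]; positivity
  · exact le_of_mul_le_mul_right hsq hSpos

end Bipartite

/-- **sampling lemma for bipartite expanders.**
`G = (U, V, E)` is a weighted bipartite graph given by its edge distribution
`p : U → V → ℝ`, with second singular value at most `lam` (hypothesis `hsv`).
Let `B ⊆ U` have stationary measure `δ`, and let `T` be the set of `v ∈ V`
for which the fraction of neighbours of `v` lying in `B` — i.e. the probability
that `u ∈ B` when `(u,v)` is drawn from the edge distribution conditioned on its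
`V`-endpoint being `v` — deviates from `δ` by more than `ε`.
Then the stationary measure of `T` is at most `lam² · δ / ε²`. -/
theorem bipartite_sampling_lemma
    {U V : Type*} [Fintype U] [Fintype V]
    (p : U → V → ℝ) (lam ε δ : ℝ) (hε : 0 < ε)
    (hp : ∀ u v, 0 ≤ p u v)
    (hsum : ∑ u, ∑ v, p u v = 1)
    (hsv : ∀ f : U → ℝ, ∀ g : V → ℝ,
      (∑ u, (∑ v, p u v) * f u) = 0 →
      (∑ v, (∑ u, p u v) * g v) = 0 →
      |∑ u, ∑ v, p u v * f u * g v| ≤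
        lam * Real.sqrt (∑ u, (∑ v, p u v) * (f u) ^ 2) *
          Real.sqrt (∑ v, (∑ u, p u v) * (g v) ^ 2))
    (B : Finset U)
    (hB : ∑ u ∈ B, ∑ v, p u v = δ)
    (T : Finset V)
    (hT : T = Finset.univ.filter
      (fun v => ε < |(∑ u ∈ B, p u v) / (∑ u, p u v) - δ|)) :
    ∑ v ∈ T, ∑ u, p u v ≤ lam ^ 2 * δ / ε ^ 2 := by
  classical
  set f : U → ℝ := fun u => (if u ∈ B then 1 else 0) - δ
  set e : V → ℝ := fun v => (∑ u ∈ B, p u v) / rightMarginal p v - δ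
  have hf : ∑ u, leftMarginal p u * f u = 0 := sum_mul_indicator_sub B hsum hB
  have hvar : ∑ u, leftMarginal p u * f u ^ 2 ≤ δ :=
    (sum_mul_indicator_sub_sq B hsum hB).trans_le (sub_le_self δ (sq_nonneg δ))
  have henergy : ∑ v, rightMarginal p v * e v ^ 2 ≤ lam ^ 2 * δ :=
    (SecondSingularValueLE.sum_rightMarginal_mul_sq_le hsv hp hsum hf
      (rightMarginal_mul_div_sub hp B δ)).trans (by gcongr)
  have hchebyshev : ε ^ 2 * ∑ v ∈ T, rightMarginal p v ≤ ∑ v, rightMarginal p v * e v ^ 2 :=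
    hT ▸ sq_mul_sum_filter_le (fun v => sum_nonneg fun u _ => hp u v) hε.le
  rw [le_div_iff₀ (by positivity), mul_comm]
  exact hchebyshev.trans henergy
end

section
/- Let X be a d-partite simplicial complex with parts V_1,…,V_d such that for every pair of distinct colors i ≠ j, the bipartite graph G_{i,j} between V_i and V_j has second singular value at most λ. Then the second largest singular value of the normalized adjacency operator of the full graph (X(1), X(2)) is at most 1/(d−1) + λ. -/
open Finset

/-!
Write a mean-zero, unit-norm `f` as `f = a ∘ col + g`, where `a i` is the `μ`-mean of `f` on the
part `V i` and `g` has mean zero on every part. Every vertex sends mass `μ u / (d - 1)` to each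
other part and `∑ i, a i = 0`, so the adjacency operator maps `a ∘ col` to `-μ (a ∘ col) / (d - 1)`:
the cross terms vanish and the part-constant term contributes `-‖a ∘ col‖² / (d - 1)`. The form
`⟨g, M g⟩` splits into off-diagonal blocks, each at most `λ ‖g_i‖ ‖g_j‖ / (d - 1)` by the bound on
`G_{i,j}`, and Cauchy–Schwarz gives `∑_{i ≠ j} ‖g_i‖ ‖g_j‖ ≤ (d - 1) ‖g‖²`. Since
`‖a ∘ col‖² + ‖g‖² = 1`, the total is at most `1 / (d - 1) + λ`.
-/

section PartiteSums

variable {V ι : Type*} [Fintype V] [DecidableEq ι] {col : V → ι}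

lemma sum_sum_erase_mul_le [Fintype ι] (s : ι → ℝ) :
    ∑ i, ∑ j ∈ univ.erase i, s i * s j ≤ (Fintype.card ι - 1) * ∑ i, s i ^ 2 := by
  have h : ∑ i, ∑ j ∈ univ.erase i, s i * s j = (∑ i, s i) ^ 2 - ∑ i, s i ^ 2 := by
    simp only [← mul_sum, sum_erase_eq_sub (mem_univ _), sum_sub_distrib, ← sum_mul, sq]
  have hcs := sq_sum_le_card_mul_sum_sq (s := univ) (f := s)
  rw [card_univ] at hcs
  rw [h, sub_mul, one_mul]
  linarith

lemma abs_le_div_mul_of_abs_mul_le {D lam x p q : ℝ} (hD : 1 < D)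
    (h : |D * (D - 1) * x| ≤ lam * √(D * p) * √(D * q)) :
    |x| ≤ lam / (D - 1) * (√p * √q) := by
  have hD0 : 0 ≤ D := by linarith
  have hDD : √D * √D = D := Real.mul_self_sqrt hD0
  rw [Real.sqrt_mul hD0, Real.sqrt_mul hD0, abs_mul, abs_of_pos (by nlinarith)] at h
  rw [div_mul_eq_mul_div, le_div_iff₀ (by linarith)]
  refine le_of_mul_le_mul_left ?_ (by linarith : 0 < D)
  calc D * (|x| * (D - 1)) = D * (D - 1) * |x| := by ring
    _ ≤ lam * (√D * √p) * (√D * √q) := h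
    _ = D * (lam * (√p * √q)) := by linear_combination lam * √p * √q * hDD

lemma sum_comp_mul_eq_sum_mul_sum_part [Fintype ι] (c : ι → ℝ) (h : V → ℝ) :
    ∑ v, c (col v) * h v = ∑ i, c i * ∑ v with col v = i, h v := by
  rw [← sum_fiberwise univ col]
  refine sum_congr rfl fun i _ => ?_
  rw [mul_sum]
  exact sum_congr rfl fun v hv => by rw [(mem_filter.1 hv).2]

lemma sum_comp_mul_eq_zero_of_sum_part_eq_zero [Fintype ι] {μ g : V → ℝ}
    (hg : ∀ i, ∑ v with col v = i, μ v * g v = 0) (c : ι → ℝ) :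
    ∑ v, c (col v) * (μ v * g v) = 0 := by
  simp [sum_comp_mul_eq_sum_mul_sum_part, hg]

lemma sum_mul_sq_comp_add_of_sum_part_eq_zero [Fintype ι] {μ g : V → ℝ}
    (hg : ∀ i, ∑ v with col v = i, μ v * g v = 0) (c : ι → ℝ) :
    ∑ v, μ v * (c (col v) + g v) ^ 2 = ∑ v, μ v * c (col v) ^ 2 + ∑ v, μ v * g v ^ 2 := by
  have hcross := sum_comp_mul_eq_zero_of_sum_part_eq_zero hg c
  have hexp : ∀ v, μ v * (c (col v) + g v) ^ 2
      = μ v * c (col v) ^ 2 + 2 * (c (col v) * (μ v * g v)) + μ v * g v ^ 2 := fun v => by ring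
  simp only [hexp, sum_add_distrib, ← mul_sum, hcross, mul_zero, add_zero]

noncomputable def partMean (col : V → ι) (μ f : V → ℝ) (i : ι) : ℝ :=
  (∑ v with col v = i, μ v * f v) / ∑ v with col v = i, μ v

lemma sum_mul_sub_partMean_eq_zero (μ f : V → ℝ) {i : ι} (hi : ∑ v with col v = i, μ v ≠ 0) :
    ∑ v with col v = i, μ v * (f v - partMean col μ f (col v)) = 0 := by
  have hterm : ∀ v ∈ ({v | col v = i} : Finset V),
      μ v * (f v - partMean col μ f (col v)) = μ v * f v - partMean col μ f i * μ v := by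
    intro v hv
    rw [(mem_filter.1 hv).2]
    ring
  rw [sum_congr rfl hterm, sum_sub_distrib, ← mul_sum, partMean, div_mul_cancel₀ _ hi, sub_self]

lemma sum_partMean_eq_zero [Fintype ι] {μ f : V → ℝ} {m : ℝ}
    (hparts : ∀ i, ∑ v with col v = i, μ v = m) (hf : ∑ v, μ v * f v = 0) :
    ∑ i, partMean col μ f i = 0 := by
  simp only [partMean, hparts, ← sum_div, sum_fiberwise, hf, zero_div]

section Marginal

variable {w : V → V → ℝ} {μ : V → ℝ} {k : ℝ}

lemma nonneg_of_marginal [Nontrivial ι] (hw0 : ∀ u v, 0 ≤ w u v)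
    (hmarg : ∀ i j, i ≠ j → ∀ u, col u = i → ∑ v with col v = j, w u v = μ u / k)
    (hk : 0 < k) (u : V) : 0 ≤ μ u := by
  obtain ⟨j, hj⟩ := exists_ne (col u)
  have h : 0 ≤ μ u / k := hmarg _ j hj.symm u rfl ▸ sum_nonneg fun v _ => hw0 u v
  simpa [div_mul_cancel₀ _ hk.ne'] using mul_nonneg h hk.le

lemma sum_mul_comp_eq_neg_of_marginal [Fintype ι] (hpartite : ∀ u v, col u = col v → w u v = 0)
    (hmarg : ∀ i j, i ≠ j → ∀ u, col u = i → ∑ v with col v = j, w u v = μ u / k)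
    {c : ι → ℝ} (hc : ∑ i, c i = 0) (u : V) :
    ∑ v, w u v * c (col v) = -(μ u / k * c (col u)) := by
  have hrow : ∀ j, ∑ v with col v = j, w u v = μ u / k - if j = col u then μ u / k else 0 := by
    intro j
    split_ifs with h
    · rw [sub_self]
      exact sum_eq_zero fun v hv => hpartite u v ((mem_filter.1 hv).2.trans h).symm
    · rw [sub_zero]
      exact hmarg _ _ (Ne.symm h) u rfl
  calc ∑ v, w u v * c (col v) = ∑ v, c (col v) * w u v := sum_congr rfl fun v _ => mul_comm _ _
    _ = ∑ j, c j * (μ u / k - if j = col u then μ u / k else 0) := by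
      rw [sum_comp_mul_eq_sum_mul_sum_part]
      simp only [hrow]
    _ = -(μ u / k * c (col u)) := by
      simp only [mul_sub, sum_sub_distrib, ← sum_mul, hc, mul_ite, mul_zero, sum_ite_eq', mem_univ,
        if_true]
      ring

lemma sum_sum_mul_comp_eq_neg_of_marginal [Fintype ι]
    (hpartite : ∀ u v, col u = col v → w u v = 0)
    (hmarg : ∀ i j, i ≠ j → ∀ u, col u = i → ∑ v with col v = j, w u v = μ u / k)
    {c : ι → ℝ} (hc : ∑ i, c i = 0) (h : V → ℝ) :
    ∑ u, ∑ v, w u v * h u * c (col v) = -(∑ u, c (col u) * (μ u * h u)) / k := by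
  have hrow := sum_mul_comp_eq_neg_of_marginal hpartite hmarg hc
  calc ∑ u, ∑ v, w u v * h u * c (col v) = ∑ u, h u * ∑ v, w u v * c (col v) := by
        simp only [mul_sum]
        exact sum_congr rfl fun u _ => sum_congr rfl fun v _ => by ring
    _ = -(∑ u, c (col u) * (μ u * h u)) / k := by
        simp only [hrow, neg_div, sum_div, ← sum_neg_distrib]
        exact sum_congr rfl fun u _ => by ring

lemma sum_sum_mul_comp_add_of_marginal [Fintype ι] (hsymm : ∀ u v, w u v = w v u)
    (hpartite : ∀ u v, col u = col v → w u v = 0)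
    (hmarg : ∀ i j, i ≠ j → ∀ u, col u = i → ∑ v with col v = j, w u v = μ u / k)
    {c : ι → ℝ} (hc : ∑ i, c i = 0) {g : V → ℝ} (hg : ∀ i, ∑ v with col v = i, μ v * g v = 0) :
    ∑ u, ∑ v, w u v * (c (col u) + g u) * (c (col v) + g v)
      = -(∑ v, μ v * c (col v) ^ 2) / k + ∑ u, ∑ v, w u v * g u * g v := by
  have hpair := sum_sum_mul_comp_eq_neg_of_marginal hpartite hmarg hc
  have hzero := sum_comp_mul_eq_zero_of_sum_part_eq_zero hg c
  have hswap : ∑ u, ∑ v, w u v * c (col u) * g v = ∑ u, ∑ v, w u v * g u * c (col v) := by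
    rw [sum_comm]
    exact sum_congr rfl fun u _ => sum_congr rfl fun v _ => by rw [hsymm]; ring
  have hcc : ∑ u, c (col u) * (μ u * c (col u)) = ∑ v, μ v * c (col v) ^ 2 :=
    sum_congr rfl fun u _ => by ring
  simp only [mul_add, add_mul, sum_add_distrib, hswap, hpair, hzero, hcc]
  ring

end Marginal

lemma abs_sum_sum_le_of_offDiag_blocks [Fintype ι] {F : V → V → ℝ}
    (hF : ∀ u v, col u = col v → F u v = 0) {c : ℝ} (hc : 0 ≤ c) (s : ι → ℝ)
    (hblock : ∀ i j, i ≠ j →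
      |∑ u with col u = i, ∑ v with col v = j, F u v| ≤ c * (s i * s j)) :
    |∑ u, ∑ v, F u v| ≤ c * ((Fintype.card ι - 1) * ∑ i, s i ^ 2) := by
  set B : ι → ι → ℝ := fun i j => ∑ u with col u = i, ∑ v with col v = j, F u v
  have hdiag : ∀ i, B i i = 0 := fun i =>
    sum_eq_zero fun u hu => sum_eq_zero fun v hv =>
      hF u v ((mem_filter.1 hu).2.trans (mem_filter.1 hv).2.symm)
  have hblocks : ∑ u, ∑ v, F u v = ∑ i, ∑ j ∈ univ.erase i, B i j := by
    rw [← sum_fiberwise univ col]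
    refine sum_congr rfl fun i _ => ?_
    rw [sum_erase _ (hdiag i), eq_comm, sum_comm]
    simp only [sum_fiberwise]
  calc |∑ u, ∑ v, F u v| ≤ ∑ i, ∑ j ∈ univ.erase i, |B i j| := by
        rw [hblocks]
        exact (abs_sum_le_sum_abs _ _).trans (sum_le_sum fun i _ => abs_sum_le_sum_abs _ _)
    _ ≤ ∑ i, ∑ j ∈ univ.erase i, c * (s i * s j) := by
        gcongr with i _ j hj
        exact hblock i j (ne_of_mem_erase hj).symm
    _ = c * ∑ i, ∑ j ∈ univ.erase i, s i * s j := by simp only [mul_sum]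
    _ ≤ c * ((Fintype.card ι - 1) * ∑ i, s i ^ 2) := by gcongr; exact sum_sum_erase_mul_le s

lemma abs_sum_sum_le_of_normalized_blocks [Fintype ι] {w : V → V → ℝ} {μ g : V → ℝ}
    {D lam : ℝ} (hD : 1 < D) (hcard : (Fintype.card ι : ℝ) = D) (hμ : ∀ v, 0 ≤ μ v)
    (hlam : 0 ≤ lam) (hpartite : ∀ u v, col u = col v → w u v = 0)
    (hblock : ∀ i j, i ≠ j →
      |∑ u with col u = i, ∑ v with col v = j, D * (D - 1) * w u v * g u * g v| ≤
        lam * √(D * ∑ u with col u = i, μ u * g u ^ 2) *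
          √(D * ∑ v with col v = j, μ v * g v ^ 2)) :
    |∑ u, ∑ v, w u v * g u * g v| ≤ lam * ∑ v, μ v * g v ^ 2 := by
  have hsq : ∀ i, √(∑ v with col v = i, μ v * g v ^ 2) ^ 2 = ∑ v with col v = i, μ v * g v ^ 2 :=
    fun i => Real.sq_sqrt (sum_nonneg fun v _ => mul_nonneg (hμ v) (sq_nonneg _))
  have h := abs_sum_sum_le_of_offDiag_blocks (F := fun u v => w u v * g u * g v)
    (fun u v huv => by simp [hpartite u v huv]) (div_nonneg hlam (by linarith))
    (fun i => √(∑ v with col v = i, μ v * g v ^ 2))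
    (fun i j hij => abs_le_div_mul_of_abs_mul_le hD (by
      simpa only [mul_sum, mul_assoc] using hblock i j hij))
  simp only [hcard, hsq, sum_fiberwise] at h
  calc _ ≤ _ := h
    _ = lam * ∑ v, μ v * g v ^ 2 := by field_simp [(by linarith : D - 1 ≠ 0)]

end PartiteSums

theorem partite_graph_second_singular_value_general
    {V : Type*} [Fintype V] (d : ℕ) (hd : 2 ≤ d)
    (col : V → Fin d) (w : V → V → ℝ) (μ : V → ℝ) (lam : ℝ)
    (hw0 : ∀ u v, 0 ≤ w u v) (hsymm : ∀ u v, w u v = w v u)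
    (hpartite : ∀ u v, col u = col v → w u v = 0)
    (hlam : 0 ≤ lam)
    (hparts : ∀ i : Fin d, ∑ v ∈ Finset.univ.filter (fun v => col v = i), μ v = 1 / d)
    (hmarg : ∀ i j : Fin d, i ≠ j → ∀ u, col u = i →
      ∑ v ∈ Finset.univ.filter (fun v => col v = j), w u v = μ u / ((d : ℝ) - 1))
    (hsv : ∀ i j : Fin d, i ≠ j → ∀ f g : V → ℝ,
      (∑ u ∈ Finset.univ.filter (fun u => col u = i), μ u * f u = 0) →
      (∑ v ∈ Finset.univ.filter (fun v => col v = j), μ v * g v = 0) →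
      |∑ u ∈ Finset.univ.filter (fun u => col u = i),
          ∑ v ∈ Finset.univ.filter (fun v => col v = j),
            ((d : ℝ) * ((d : ℝ) - 1)) * w u v * f u * g v| ≤
        lam * Real.sqrt ((d : ℝ) *
            ∑ u ∈ Finset.univ.filter (fun u => col u = i), μ u * (f u) ^ 2) *
          Real.sqrt ((d : ℝ) *
            ∑ v ∈ Finset.univ.filter (fun v => col v = j), μ v * (g v) ^ 2)) :
    ∀ f : V → ℝ, (∑ v, μ v * f v = 0) → (∑ v, μ v * (f v) ^ 2 = 1) →
      |∑ u, ∑ v, w u v * f u * f v| ≤ 1 / ((d : ℝ) - 1) + lam := by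
  intro f hmean hnorm
  have hd1 : (1 : ℝ) < d := by exact_mod_cast hd
  have hk : (0 : ℝ) < d - 1 := by linarith
  have : Nontrivial (Fin d) := Fin.nontrivial_iff_two_le.mpr hd
  have hμ : ∀ v, 0 ≤ μ v := nonneg_of_marginal hw0 hmarg hk
  set a := partMean col μ f
  set g : V → ℝ := fun v => f v - a (col v)
  have hf : f = fun v => a (col v) + g v := by ext v; simp [g]
  have hg : ∀ i, ∑ v with col v = i, μ v * g v = 0 := fun i =>
    sum_mul_sub_partMean_eq_zero μ f (by rw [hparts]; positivity)
  have ha : ∑ i, a i = 0 := sum_partMean_eq_zero hparts hmean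
  set Q := ∑ v, μ v * a (col v) ^ 2
  have hgnorm : ∑ v, μ v * g v ^ 2 = 1 - Q := by
    rw [← hnorm, hf, sum_mul_sq_comp_add_of_sum_part_eq_zero hg]
    ring
  have hgg : |∑ u, ∑ v, w u v * g u * g v| ≤ lam * (1 - Q) := by
    rw [← hgnorm]
    exact abs_sum_sum_le_of_normalized_blocks hd1 (by simp) hμ hlam hpartite
      fun i j hij => hsv i j hij g g (hg i) (hg j)
  have hQ0 : 0 ≤ Q := sum_nonneg fun v _ => mul_nonneg (hμ v) (sq_nonneg _)
  have hQ1 : Q ≤ 1 := by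
    linarith [hgnorm ▸ sum_nonneg fun v _ => mul_nonneg (hμ v) (sq_nonneg (g v))]
  rw [hf, sum_sum_mul_comp_add_of_marginal hsymm hpartite hmarg ha hg]
  calc |-Q / (d - 1) + ∑ u, ∑ v, w u v * g u * g v|
      ≤ Q / (d - 1) + lam * (1 - Q) := by
        refine (abs_add_le _ _).trans (add_le_add (le_of_eq ?_) hgg)
        rw [abs_div, abs_neg, abs_of_nonneg hQ0, abs_of_pos hk]
    _ ≤ 1 / (d - 1) + lam :=
        add_le_add (div_le_div_of_nonneg_right hQ1 hk.le) (by nlinarith)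

/-- **second singular value of a `d`-partite graph.**
Let `X` be a `d`-partite simplicial complex with parts `V_1, …, V_d`, modeled by
the symmetric edge measure `w` of its underlying graph `(X(1), X(2))`, with
vertex measure `μ v = ∑ u, w v u`.  The edge measure is a uniform mixture over
ordered pairs of distinct colours of the bipartite graphs `G_{i,j}` (`hpair`),
each part has measure `1/d` (`hparts`), the marginal of `G_{i,j}` on `V_i` is
`μ` conditioned on `V_i` (`hmarg`), and each `G_{i,j}` has second singular value
at most `lam` (`hsv`, stated functionally after clearing normalizations:
the edge distribution of `G_{i,j}` is `d(d−1)·w` on `V_i × V_j`, and the vertex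
distribution on a part is `d·μ`).  Then the normalized adjacency operator of the
full graph has second largest singular value at most `1/(d−1) + lam`:
for every mean-zero function `f` of unit norm, `|⟨f, M f⟩| ≤ 1/(d−1) + lam`. -/
theorem partite_graph_second_singular_value
    {V : Type*} [Fintype V] (d : ℕ) (hd : 2 ≤ d)
    (col : V → Fin d) (w : V → V → ℝ) (μ : V → ℝ) (lam : ℝ)
    (hw0 : ∀ u v, 0 ≤ w u v) (hsymm : ∀ u v, w u v = w v u)
    (hpartite : ∀ u v, col u = col v → w u v = 0)
    (hμ : ∀ v, μ v = ∑ u, w v u)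
    (hsum : ∑ v, μ v = 1)
    (hlam : 0 ≤ lam)
    (hparts : ∀ i : Fin d, ∑ v ∈ Finset.univ.filter (fun v => col v = i), μ v = 1 / d)
    (hpair : ∀ i j : Fin d, i ≠ j →
      ∑ u ∈ Finset.univ.filter (fun u => col u = i),
        ∑ v ∈ Finset.univ.filter (fun v => col v = j), w u v
        = 1 / ((d : ℝ) * ((d : ℝ) - 1)))
    (hmarg : ∀ i j : Fin d, i ≠ j → ∀ u, col u = i →
      ∑ v ∈ Finset.univ.filter (fun v => col v = j), w u v = μ u / ((d : ℝ) - 1))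
    (hsv : ∀ i j : Fin d, i ≠ j → ∀ f g : V → ℝ,
      (∑ u ∈ Finset.univ.filter (fun u => col u = i), μ u * f u = 0) →
      (∑ v ∈ Finset.univ.filter (fun v => col v = j), μ v * g v = 0) →
      |∑ u ∈ Finset.univ.filter (fun u => col u = i),
          ∑ v ∈ Finset.univ.filter (fun v => col v = j),
            ((d : ℝ) * ((d : ℝ) - 1)) * w u v * f u * g v| ≤
        lam * Real.sqrt ((d : ℝ) *
            ∑ u ∈ Finset.univ.filter (fun u => col u = i), μ u * (f u) ^ 2) *
          Real.sqrt ((d : ℝ) *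
            ∑ v ∈ Finset.univ.filter (fun v => col v = j), μ v * (g v) ^ 2)) :
    ∀ f : V → ℝ, (∑ v, μ v * f v = 0) → (∑ v, μ v * (f v) ^ 2 = 1) →
      |∑ u, ∑ v, w u v * f u * f v| ≤ 1 / ((d : ℝ) - 1) + lam :=
  partite_graph_second_singular_value_general d hd col w μ lam hw0 hsymm hpartite hlam hparts hmarg
    hsv
end

section
/- A polynomial f in m variables over a field F is identically zero on H^m for a subset H ⊆ F if and only if there exist polynomials P_1, …, P_m of degree at most deg(f) such that f(x) = Σ_{i=1}^m g_H(x_i)·P_i(x_1,…,x_m), where g_H(x) = Π_{h∈H}(x−h). -/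
open Finset

namespace ZeroOnSubcubeAux

open MvPolynomial

variable {F : Type*} [Field F] [DecidableEq F]

/-- A multivariate polynomial whose degree in each variable is less than `H.card`
and which vanishes on the grid `H^m` is zero. -/
theorem grid_zero : ∀ (m : ℕ) (H : Finset F) (f : MvPolynomial (Fin m) F),
    (∀ i : Fin m, f.degreeOf i < H.card) →
    (∀ x : Fin m → F, (∀ i, x i ∈ H) → MvPolynomial.eval x f = 0) → f = 0 := by
  intro m
  induction m with
  | zero =>
    intro H f _ hv
    obtain ⟨c, rfl⟩ := C_surjective (Fin 0) f
    have := hv (fun i => i.elim0) (fun i => i.elim0)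
    simpa using this
  | succ m ih =>
    intro H f hdeg hv
    have key : ∀ i : ℕ, (finSuccEquiv F m f).coeff i = 0 := by
      intro i
      apply ih H
      · intro j
        exact lt_of_le_of_lt (degreeOf_coeff_finSuccEquiv f j i) (hdeg j.succ)
      · intro y hy
        have hmap : (finSuccEquiv F m f).map (MvPolynomial.eval y) = 0 := by
          apply Polynomial.eq_zero_of_natDegree_lt_card_of_eval_eq_zero _
            (f := (Subtype.val : {x // x ∈ H} → F)) Subtype.val_injective
          · intro h
            rw [← eval_eq_eval_mv_eval']
            apply hv
            intro j
            refine Fin.cases ?_ ?_ j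
            · simpa using h.2
            · intro j'; simpa using hy j'
          · have h1 : ((finSuccEquiv F m f).map (MvPolynomial.eval y)).natDegree ≤
                (finSuccEquiv F m f).natDegree := Polynomial.natDegree_map_le
            have h2 : (finSuccEquiv F m f).natDegree = degreeOf 0 f :=
              natDegree_finSuccEquiv f
            have h3 := hdeg 0
            simp only [Fintype.card_coe]
            omega
        have := congrArg (fun p => Polynomial.coeff p i) hmap
        simpa [Polynomial.coeff_map] using this
    have hq : finSuccEquiv F m f = 0 := Polynomial.ext fun i => by simp [key i]
    exact (map_eq_zero_iff _ (finSuccEquiv F m).injective).mp hq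

theorem totalDegree_aeval_X_le {m : ℕ} (p : Polynomial F) (i : Fin m) :
    (Polynomial.aeval (X i : MvPolynomial (Fin m) F) p).totalDegree ≤ p.natDegree := by
  rw [Polynomial.aeval_eq_sum_range]
  refine le_trans (totalDegree_finset_sum _ _) (Finset.sup_le fun k hk => ?_)
  refine le_trans (totalDegree_smul_le _ _) ?_
  refine le_trans (totalDegree_pow _ _) ?_
  rw [totalDegree_X]
  have : k < p.natDegree + 1 := Finset.mem_range.mp hk
  omega

theorem aux_E (H : Finset F) (hH : H.Nonempty) {m : ℕ} (i : Fin m) :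
    ((X i : MvPolynomial (Fin m) F) ^ H.card -
      ∏ h ∈ H, (X i - C h)).totalDegree ≤ H.card - 1 := by
  set G : Polynomial F := ∏ h ∈ H, (Polynomial.X - Polynomial.C h) with hG
  have hmon : ∀ h ∈ H, (Polynomial.X - Polynomial.C h).Monic :=
    fun h _ => Polynomial.monic_X_sub_C h
  have hGm : G.Monic := Polynomial.monic_prod_of_monic _ _ hmon
  have hGdeg : G.natDegree = H.card := by
    rw [hG, Polynomial.natDegree_prod_of_monic _ _ hmon]
    simp [Polynomial.natDegree_X_sub_C]
  have hplug : Polynomial.aeval (X i : MvPolynomial (Fin m) F)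
      (Polynomial.X ^ H.card - G) =
      (X i : MvPolynomial (Fin m) F) ^ H.card - ∏ h ∈ H, (X i - C h) := by
    simp [hG, map_prod, algebraMap_eq]
  rw [← hplug]
  refine le_trans (totalDegree_aeval_X_le _ _) ?_
  rw [Polynomial.natDegree_le_iff_coeff_eq_zero]
  intro N hN
  have hcard : 0 < H.card := Finset.card_pos.mpr hH
  have hN' : H.card ≤ N := by omega
  rw [Polynomial.coeff_sub, Polynomial.coeff_X_pow]
  rcases eq_or_lt_of_le hN' with h | h
  · rw [if_pos h.symm]
    have : G.coeff N = 1 := by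
      rw [← h, ← hGdeg]
      exact hGm.coeff_natDegree
    rw [this, sub_self]
  · rw [if_neg (by omega)]
    rw [Polynomial.coeff_eq_zero_of_natDegree_lt (by omega : G.natDegree < N)]
    simp

theorem division (m : ℕ) (H : Finset F) (hH : H.Nonempty) :
    ∀ (d : ℕ) (f : MvPolynomial (Fin m) F), f.totalDegree ≤ d →
    ∃ (P : Fin m → MvPolynomial (Fin m) F) (r : MvPolynomial (Fin m) F),
      (∀ i, (P i).totalDegree ≤ d) ∧ (∀ i, r.degreeOf i < H.card) ∧
      f = (∑ i, (∏ h ∈ H, (X i - C h)) * P i) + r := by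
  have hn : 0 < H.card := Finset.card_pos.mpr hH
  intro d
  induction d using Nat.strong_induction_on with
  | _ d IH =>
  intro f hf
  set n := H.card with hncard
  set g : Fin m → MvPolynomial (Fin m) F := fun i => ∏ h ∈ H, (X i - C h) with hg
  set Q : MvPolynomial (Fin m) F → Prop := fun p =>
    ∃ (P : Fin m → MvPolynomial (Fin m) F) (r : MvPolynomial (Fin m) F),
      (∀ i, (P i).totalDegree ≤ d) ∧ (∀ i, r.degreeOf i < n) ∧
      p = (∑ i, g i * P i) + r with hQ
  have Q0 : Q 0 := ⟨0, 0, fun i => by simp, fun i => by simpa using hn, by simp⟩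
  have Qadd : ∀ p q, Q p → Q q → Q (p + q) := by
    rintro p q ⟨P1, r1, h1, h2, rfl⟩ ⟨P2, r2, h3, h4, rfl⟩
    refine ⟨fun i => P1 i + P2 i, r1 + r2, ?_, ?_, ?_⟩
    · intro i; exact le_trans (totalDegree_add _ _) (max_le (h1 i) (h3 i))
    · intro i; exact lt_of_le_of_lt (degreeOf_add_le _ _ _) (max_lt (h2 i) (h4 i))
    · simp only [mul_add, Finset.sum_add_distrib]; ring
  have hmono : ∀ s ∈ f.support, Q (monomial s (MvPolynomial.coeff s f)) := by
    intro s hs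
    set c := MvPolynomial.coeff s f with hc
    have hsd : (s.sum fun _ e => e) ≤ d := le_trans (le_totalDegree hs) hf
    by_cases hcase : ∀ i, s i < n
    · refine ⟨0, monomial s c, fun i => by simp, ?_, by simp⟩
      intro i
      rw [degreeOf_lt_iff hn]
      intro t ht
      have := support_monomial_subset ht
      rw [Finset.mem_singleton] at this
      subst this
      exact hcase i
    · push_neg at hcase
      obtain ⟨i, hi⟩ := hcase
      set s' : Fin m →₀ ℕ := s - Finsupp.single i n with hs'
      have hsplit : Finsupp.single i n + s' = s := by
        ext j
        simp only [hs', Finsupp.add_apply, Finsupp.tsub_apply, Finsupp.single_apply]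
        by_cases hj : i = j
        · subst hj; rw [if_pos rfl]; omega
        · simp [hj]
      have hsum : n + (s'.sum fun _ e => e) = s.sum fun _ e => e := by
        conv_rhs => rw [← hsplit]
        rw [Finsupp.sum_add_index' (fun _ => rfl) (fun _ _ _ => rfl)]
        rw [Finsupp.sum_single_index rfl]
      set A : MvPolynomial (Fin m) F := monomial s' c with hA
      have hAdeg : A.totalDegree ≤ s'.sum fun _ e => e := totalDegree_monomial_le _ _
      have hXpow : (X i : MvPolynomial (Fin m) F) ^ n * A = monomial s c := by
        rw [hA, X_pow_eq_monomial, monomial_mul, one_mul, hsplit]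
      set E : MvPolynomial (Fin m) F := (X i) ^ n - g i with hE
      have hEdeg : E.totalDegree ≤ n - 1 := aux_E H hH i
      have hs_ge : n ≤ s.sum fun _ e => e := hsum ▸ Nat.le_add_right _ _
      have hAd : A.totalDegree ≤ d := le_trans hAdeg (by omega)
      set d' : ℕ := (s.sum fun _ e => e) - 1 with hd'
      have hd'lt : d' < d := by omega
      have hEA : (E * A).totalDegree ≤ d' := by
        refine le_trans (totalDegree_mul _ _) ?_
        omega
      obtain ⟨P', r', hP', hr', heq⟩ := IH d' hd'lt (E * A) hEA
      refine ⟨fun j => P' j + if j = i then A else 0, r', ?_, hr', ?_⟩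
      · intro j
        refine le_trans (totalDegree_add _ _) (max_le (le_trans (hP' j) (by omega)) ?_)
        by_cases h : j = i
        · rw [if_pos h]; exact hAd
        · simp [h]
      · have expand : ∑ j, g j * (P' j + if j = i then A else 0) =
            (∑ j, g j * P' j) + g i * A := by
          simp [mul_add, Finset.sum_add_distrib, mul_ite, Finset.sum_ite_eq']
        rw [expand]
        calc monomial s c = (X i) ^ n * A := hXpow.symm
          _ = g i * A + E * A := by rw [hE]; ring
          _ = g i * A + ((∑ j, g j * P' j) + r') := by rw [← heq]
          _ = ((∑ j, g j * P' j) + g i * A) + r' := by ring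
  have : Q f := by
    conv => rw [← support_sum_monomial_coeff f]
    exact Finset.sum_induction _ Q Qadd Q0 hmono
  exact this

theorem eval_g_zero {m : ℕ} (H : Finset F) (i : Fin m) (x : Fin m → F) (hx : x i ∈ H) :
    MvPolynomial.eval x (∏ h ∈ H, (X i - C h)) = 0 := by
  rw [map_prod]
  exact Finset.prod_eq_zero hx (by simp)

end ZeroOnSubcubeAux

/-- **zero on a subcube.**
A polynomial `f` in `m` variables over a field `F` is identically zero on `H^m`
(for a finite subset `H ⊆ F`) if and only if there exist polynomials
`P_1, …, P_m` of total degree at most `deg f` such that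
`f = ∑ i, g_H(x_i) · P_i`, where `g_H(x) = ∏_{h ∈ H} (x − h)`. -/
theorem zero_on_subcube_iff_divisible
    {F : Type*} [Field F] [DecidableEq F] (m : ℕ) (H : Finset F)
    (f : MvPolynomial (Fin m) F) :
    (∀ x : Fin m → F, (∀ i, x i ∈ H) → MvPolynomial.eval x f = 0) ↔
    ∃ P : Fin m → MvPolynomial (Fin m) F,
      (∀ i, (P i).totalDegree ≤ f.totalDegree) ∧
      f = ∑ i : Fin m,
        (∏ h ∈ H, (MvPolynomial.X i - MvPolynomial.C h)) * P i := by
  constructor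
  · intro hv
    rcases H.eq_empty_or_nonempty with rfl | hH
    · rcases Nat.eq_zero_or_pos m with rfl | hm
      · have hf0 : f = 0 :=
          ZeroOnSubcubeAux.grid_zero 0 ∅ f (fun i => i.elim0) hv
        exact ⟨0, fun i => by simp, by simp [hf0]⟩
      · refine ⟨fun j => if j = ⟨0, hm⟩ then f else 0, ?_, ?_⟩
        · intro j
          by_cases h : j = ⟨0, hm⟩ <;> simp [h]
        · simp [Finset.sum_ite_eq']
    · obtain ⟨P, r, hP, hr, heq⟩ :=
        ZeroOnSubcubeAux.division m H hH f.totalDegree f le_rfl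
      have hrv : ∀ x : Fin m → F, (∀ i, x i ∈ H) → MvPolynomial.eval x r = 0 := by
        intro x hx
        have h0 := hv x hx
        rw [heq, map_add, map_sum] at h0
        have hz : ∀ i ∈ (Finset.univ : Finset (Fin m)),
            MvPolynomial.eval x ((∏ h ∈ H, (MvPolynomial.X i - MvPolynomial.C h)) * P i)
              = 0 := by
          intro i _
          rw [map_mul, ZeroOnSubcubeAux.eval_g_zero H i x (hx i), zero_mul]
        rw [Finset.sum_eq_zero hz, zero_add] at h0
        exact h0
      have hr0 : r = 0 := ZeroOnSubcubeAux.grid_zero m H r hr hrv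
      exact ⟨P, hP, by rw [heq, hr0, add_zero]⟩
  · rintro ⟨P, -, rfl⟩ x hx
    rw [map_sum]
    refine Finset.sum_eq_zero fun i _ => ?_
    rw [map_mul, ZeroOnSubcubeAux.eval_g_zero H i x (hx i), zero_mul]
end

section
/- Let A be a polynomial in m variables over a field F, let H ⊆ F contain {0,1}, let φ̃ be the low-degree extension of the indicator of clauses of a 3-SAT formula φ on variable set H^m, and define p_{φ,A}(i,j,k,b₁,b₂,b₃) = φ̃(i,j,k,b₁,b₂,b₃)·(A(i)−b₁)·(A(j)−b₂)·(A(k)−b₃). Then p_{φ,A} is identically zero on H^{3m+3} if and only if the restriction of A to H^m is a satisfying assignment for φ. -/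
open scoped Classical

/-- **arithmetization of 3-SAT.**
Variables are identified with `H^m`; a 3-SAT formula `φ` is the set `Cl` of its
clauses, each clause being a triple of literals `(variable, sign)` with
variables in `H^m` and signs in `{0,1}` (hypothesis `hCl`).  `φt` is any
extension of the indicator of `Cl` agreeing with it on `H`-points (hypothesis
`hφ`), and `p_{φ,A}(i,j,k,b₁,b₂,b₃) = φt(i,j,k,b₁,b₂,b₃)·(A i − b₁)·(A j − b₂)·(A k − b₃)`.
Then `p_{φ,A}` is identically zero on `H^{3m+3}` if and only if the restriction
of `A` to `H^m` is a satisfying assignment for `φ`, i.e. every clause of `φ` has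
`(A i − b₁)(A j − b₂)(A k − b₃) = 0`. -/
theorem arithmetization_zero_iff_satisfying
    {F : Type*} [Field F] (m : ℕ) (H : Finset F)
    (h0 : (0 : F) ∈ H) (h1 : (1 : F) ∈ H)
    (Cl : Set (((Fin m → F) × F) × ((Fin m → F) × F) × ((Fin m → F) × F)))
    (hCl : ∀ c ∈ Cl,
      (∀ t, c.1.1 t ∈ H) ∧ (∀ t, c.2.1.1 t ∈ H) ∧ (∀ t, c.2.2.1 t ∈ H) ∧
      c.1.2 ∈ ({0, 1} : Set F) ∧ c.2.1.2 ∈ ({0, 1} : Set F) ∧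
      c.2.2.2 ∈ ({0, 1} : Set F))
    (φt : (Fin m → F) → (Fin m → F) → (Fin m → F) → F → F → F → F)
    (hφ : ∀ i j k b₁ b₂ b₃,
      (∀ t, i t ∈ H) → (∀ t, j t ∈ H) → (∀ t, k t ∈ H) →
      b₁ ∈ H → b₂ ∈ H → b₃ ∈ H →
      φt i j k b₁ b₂ b₃ = if ((i, b₁), (j, b₂), (k, b₃)) ∈ Cl then 1 else 0)
    (A : (Fin m → F) → F) :
    (∀ i j k b₁ b₂ b₃,
      (∀ t, i t ∈ H) → (∀ t, j t ∈ H) → (∀ t, k t ∈ H) →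
      b₁ ∈ H → b₂ ∈ H → b₃ ∈ H →
      φt i j k b₁ b₂ b₃ * (A i - b₁) * (A j - b₂) * (A k - b₃) = 0) ↔
    (∀ c ∈ Cl,
      (A c.1.1 - c.1.2) * (A c.2.1.1 - c.2.1.2) * (A c.2.2.1 - c.2.2.2) = 0) := by

  constructor
  · rintro h ⟨⟨i,b₁⟩,⟨j,b₂⟩,⟨k,b₃⟩⟩ hc
    obtain ⟨hi, hj, hk, hb1, hb2, hb3⟩ := hCl _ hc
    have mem : ∀ b : F, b ∈ ({0, 1} : Set F) → b ∈ H := by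
      rintro b (rfl | rfl)
      exacts [h0, h1]
    have hb1H : b₁ ∈ H := mem _ hb1
    have hb2H : b₂ ∈ H := mem _ hb2
    have hb3H : b₃ ∈ H := mem _ hb3
    have := h i j k b₁ b₂ b₃ hi hj hk hb1H hb2H hb3H
    rw [hφ i j k b₁ b₂ b₃ hi hj hk hb1H hb2H hb3H] at this
    simp only [hc, if_pos] at this
    simpa [mul_assoc] using this
  · intro h i j k b₁ b₂ b₃ hi hj hk hb1 hb2 hb3
    rw [hφ i j k b₁ b₂ b₃ hi hj hk hb1 hb2 hb3]
    by_cases hc : ((i, b₁), (j, b₂), (k, b₃)) ∈ Cl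
    · have := h _ hc
      simp only [hc, if_pos]
      simpa [mul_assoc] using this
    · simp [hc]
end

section
/- Let Q₁ be a system of m₁ polynomial equations over F_q in variables X, and let G ∈ F_q^{m×m₁} be the generating matrix of a linear code of relative distance at least 1 − 2/q. Define a new system Q of m equations whose j-th equation is the G_{j,·}-linear combination of the equations of Q₁. Then any assignment X satisfying Q₁ satisfies Q; and if Q₁ is unsatisfiable, every assignment satisfies at most a 2/q fraction of the equations of Q. -/
open Finset

/-- **gap amplification for quadratic equations via a code.**
`Q₁` is a system of `m₁` equations `P k x = b k` over a finite field `F` (each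
equation evaluated on assignments `x : ι → F`), and `G` is the generating matrix
of a linear code of relative distance at least `1 − 2/q` (`hdist`: every
nonzero `c` has at most `2m/q` coordinates `j` with `(Gc)_j = 0`, where
`q = |F|`).  The new system `Q` has, for each `j`, the `G_{j,·}`-linear
combination of the equations of `Q₁`.  Then any assignment satisfying `Q₁`
satisfies `Q`; and if `Q₁` is unsatisfiable, every assignment satisfies at most
a `2/q` fraction of the equations of `Q`. -/
theorem code_amplification_of_equations
    {F : Type*} [Field F] [Fintype F] [DecidableEq F] {ι : Type*}
    (m₁ m : ℕ) (P : Fin m₁ → (ι → F) → F) (b : Fin m₁ → F)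
    (G : Fin m → Fin m₁ → F)
    (hdist : ∀ c : Fin m₁ → F, c ≠ 0 →
      ((Finset.univ.filter (fun j : Fin m => ∑ k, G j k * c k = 0)).card : ℝ)
        ≤ 2 * m / (Fintype.card F : ℝ)) :
    (∀ x : ι → F, (∀ k, P k x = b k) →
      ∀ j : Fin m, ∑ k, G j k * P k x = ∑ k, G j k * b k) ∧
    ((¬ ∃ x : ι → F, ∀ k, P k x = b k) →
      ∀ x : ι → F,
        ((Finset.univ.filter
            (fun j : Fin m => ∑ k, G j k * P k x = ∑ k, G j k * b k)).card : ℝ)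
          ≤ 2 * m / (Fintype.card F : ℝ)) := by
  constructor
  · intro x hx j
    simp [hx]
  · intro hns x
    have hc : (fun k => P k x - b k) ≠ 0 := by
      intro h
      exact hns ⟨x, fun k => sub_eq_zero.mp (congrFun h k)⟩
    have := hdist _ hc
    refine le_trans (le_of_eq ?_) this
    congr 1
    apply congrArg
    apply Finset.filter_congr
    intro j _
    simp [mul_sub, Finset.sum_sub_distrib, sub_eq_zero]
end

section
/- Let {H(i)}_{i≥0} be the filtration of the compact group H(0) = K_ℓ ⊆ G(Q_ℓ) defined by H(i) = {A ∈ M_g(O_{D,ℓ}) ∩ G(Q_ℓ) : A ≡ 1 mod ϖ^i O_{D,ℓ}} for i > 0, where ϖ ∈ O_{D,ℓ} has reduced norm of ℓ-adic valuation 1. Then the reduced trace of every element of H(i) lies in 2g + ℓ^{⌈i/2⌉}·Z_ℓ. -/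
open Finset

noncomputable section

/-- The ramified quaternion algebra `D_ℓ = ℚ_ℓ ⟨i, j⟩` with `i² = −1`, `j² = −ℓ`. -/
def Dquat (ℓ : ℕ) [Fact ℓ.Prime] : Type :=
  QuaternionAlgebra ℚ_[ℓ] (-1) 0 (-(ℓ : ℚ_[ℓ]))

instance (ℓ : ℕ) [Fact ℓ.Prime] : Ring (Dquat ℓ) :=
  inferInstanceAs (Ring (QuaternionAlgebra ℚ_[ℓ] (-1) 0 (-(ℓ : ℚ_[ℓ]))))

instance (ℓ : ℕ) [Fact ℓ.Prime] : StarRing (Dquat ℓ) :=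
  inferInstanceAs (StarRing (QuaternionAlgebra ℚ_[ℓ] (-1) 0 (-(ℓ : ℚ_[ℓ]))))

/-- The reduced norm `N(x) = x·x̄` of a quaternion, as a scalar. -/
def redNorm (ℓ : ℕ) [Fact ℓ.Prime] (x : Dquat ℓ) : ℚ_[ℓ] :=
  (x * star x).re

/-! The reduced norm of `x = a + b i + c j + d k` is `(a² + b²) + ℓ (c² + d²)`. As `-1` is not a
square mod `ℓ ≡ 3 (mod 4)`, `‖a² + b²‖ = max(‖a‖, ‖b‖)²` is an even power of `ℓ` while
`‖ℓ (c² + d²)‖` is an odd one, so the two summands cannot cancel and `‖a‖² ≤ ‖N(x)‖`. Applied to a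
diagonal entry of `A - 1`, whose reduced trace is `2a`, this gives `‖2a‖ ≤ ‖a‖ ≤ ℓ^(-⌈i/2⌉)`, and
the ultrametric inequality bounds the sum over the diagonal. -/

namespace Padic

variable {p : ℕ} [Fact p.Prime]

theorem norm_one_add_sq (hp : p % 4 = 3) {t : ℚ_[p]} (ht : ‖t‖ ≤ 1) : ‖1 + t ^ 2‖ = 1 := by
  refine le_antisymm ((nonarchimedean _ _).trans (max_le (by simp) ?_)) (not_lt.mp fun hlt => ?_)
  · rw [norm_pow]; exact pow_le_one₀ (norm_nonneg t) ht
  -- an integer `u` with `p ∣ 1 + u²` would make `-1` a square mod `p`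
  set u : ℤ_[p] := ⟨t, ht⟩
  have hdvd : (p : ℤ_[p]) ∣ 1 + u ^ 2 := (PadicInt.norm_lt_one_iff_dvd _).mp hlt
  have hsq : PadicInt.toZMod u ^ 2 = -1 := by
    obtain ⟨y, hy⟩ := hdvd
    have h0 := congrArg PadicInt.toZMod hy
    rw [map_mul, map_natCast, ZMod.natCast_self, zero_mul, map_add, map_one, map_pow] at h0
    linear_combination h0
  exact ZMod.exists_sq_eq_neg_one_iff.mp ⟨_, by rw [← hsq, sq]⟩ (by omega)

theorem norm_sq_add_sq (hp : p % 4 = 3) (a b : ℚ_[p]) :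
    ‖a ^ 2 + b ^ 2‖ = max ‖a‖ ‖b‖ ^ 2 := by
  wlog hba : ‖b‖ ≤ ‖a‖ generalizing a b
  · rw [add_comm, max_comm]; exact this b a (le_of_not_ge hba)
  rcases eq_or_ne a 0 with rfl | ha
  · simp [norm_le_zero_iff.mp (by simpa using hba)]
  have hq : ‖b / a‖ ≤ 1 := by rw [norm_div]; exact div_le_one_of_le₀ hba (norm_nonneg a)
  calc ‖a ^ 2 + b ^ 2‖ = ‖a ^ 2 * (1 + (b / a) ^ 2)‖ := by congr 1; field_simp
    _ = max ‖a‖ ‖b‖ ^ 2 := by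
      rw [norm_mul, norm_one_add_sq hp hq, norm_pow, max_eq_left hba, mul_one]

theorem norm_sq_ne_inv_mul_norm_sq {x : ℚ_[p]} (hx : x ≠ 0) (y : ℚ_[p]) :
    ‖x‖ ^ 2 ≠ (p : ℝ)⁻¹ * ‖y‖ ^ 2 := by
  rcases eq_or_ne y 0 with rfl | hy
  · simpa using hx
  have hp : (1 : ℝ) < p := mod_cast (Fact.out : p.Prime).one_lt
  rw [norm_eq_zpow_neg_valuation hx, norm_eq_zpow_neg_valuation hy, ← zpow_neg_one,
    ← zpow_natCast, ← zpow_natCast, ← zpow_mul, ← zpow_mul, ← zpow_add₀ (by positivity)]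
  intro h
  have := zpow_right_injective₀ (by positivity : (0 : ℝ) < p) hp.ne' h
  omega

theorem norm_sq_add_sq_le_norm_add_p_mul (hp : p % 4 = 3) (a b c d : ℚ_[p]) :
    ‖a ^ 2 + b ^ 2‖ ≤ ‖a ^ 2 + b ^ 2 + p * (c ^ 2 + d ^ 2)‖ := by
  obtain ⟨x, hx⟩ : ∃ x : ℚ_[p], max ‖a‖ ‖b‖ = ‖x‖ :=
    (max_choice ‖a‖ ‖b‖).elim (⟨a, ·⟩) (⟨b, ·⟩)
  obtain ⟨y, hy⟩ : ∃ y : ℚ_[p], max ‖c‖ ‖d‖ = ‖y‖ :=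
    (max_choice ‖c‖ ‖d‖).elim (⟨c, ·⟩) (⟨d, ·⟩)
  rcases eq_or_ne x 0 with rfl | hx0
  · rw [norm_sq_add_sq hp, hx, norm_zero, zero_pow two_ne_zero]
    exact norm_nonneg _
  have hne : ‖a ^ 2 + b ^ 2‖ ≠ ‖(p : ℚ_[p]) * (c ^ 2 + d ^ 2)‖ := by
    rw [norm_mul, norm_p, norm_sq_add_sq hp, norm_sq_add_sq hp, hx, hy]
    exact norm_sq_ne_inv_mul_norm_sq hx0 y
  rw [add_eq_max_of_ne hne]
  exact le_max_left _ _

theorem norm_le_inv_pow_of_sq_le {i : ℕ} {a : ℚ_[p]} (h : ‖a‖ ^ 2 ≤ (p : ℝ)⁻¹ ^ i) :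
    ‖a‖ ≤ (p : ℝ)⁻¹ ^ ((i + 1) / 2) := by
  rcases eq_or_ne a 0 with rfl | ha
  · rw [norm_zero]; positivity
  have hp : (1 : ℝ) < p := mod_cast (Fact.out : p.Prime).one_lt
  have hinv (k : ℕ) : (p : ℝ)⁻¹ ^ k = (p : ℝ) ^ (-(k : ℤ)) := by
    rw [inv_pow, ← zpow_natCast, ← zpow_neg]
  rw [norm_eq_zpow_neg_valuation ha, hinv] at h ⊢
  rw [← zpow_natCast _ 2, ← zpow_mul, zpow_le_zpow_iff_right₀ hp] at h
  rw [zpow_le_zpow_iff_right₀ hp]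
  omega

end Padic

theorem redNorm_eq (ℓ : ℕ) [Fact ℓ.Prime] (x : Dquat ℓ) :
    redNorm ℓ x = x.re ^ 2 + x.imI ^ 2 + ℓ * (x.imJ ^ 2 + x.imK ^ 2) := by
  -- the `QuaternionAlgebra` simp lemmas only fire once `Dquat ℓ` is unfolded
  have key (y : QuaternionAlgebra ℚ_[ℓ] (-1) 0 (-(ℓ : ℚ_[ℓ]))) :
      (y * star y).re = y.re ^ 2 + y.imI ^ 2 + ℓ * (y.imJ ^ 2 + y.imK ^ 2) := by
    simp only [QuaternionAlgebra.re_mul, QuaternionAlgebra.re_star, QuaternionAlgebra.imI_star,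
      QuaternionAlgebra.imJ_star, QuaternionAlgebra.imK_star]
    ring
  exact key x

theorem norm_re_sq_le_norm_redNorm {ℓ : ℕ} [Fact ℓ.Prime] (hℓ : ℓ % 4 = 3) (x : Dquat ℓ) :
    ‖x.re‖ ^ 2 ≤ ‖redNorm ℓ x‖ :=
  calc ‖x.re‖ ^ 2 ≤ max ‖x.re‖ ‖x.imI‖ ^ 2 := by gcongr; exact le_max_left _ _
    _ = ‖x.re ^ 2 + x.imI ^ 2‖ := (Padic.norm_sq_add_sq hℓ _ _).symm
    _ ≤ ‖redNorm ℓ x‖ := redNorm_eq ℓ x ▸ Padic.norm_sq_add_sq_le_norm_add_p_mul hℓ _ _ _ _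

theorem norm_two_mul_re_le {ℓ : ℕ} [Fact ℓ.Prime] (hℓ : ℓ % 4 = 3) {i : ℕ} {x : Dquat ℓ}
    (hx : ‖redNorm ℓ x‖ ≤ (ℓ : ℝ)⁻¹ ^ i) : ‖2 * x.re‖ ≤ (ℓ : ℝ)⁻¹ ^ ((i + 1) / 2) :=
  calc ‖2 * x.re‖ ≤ ‖x.re‖ := by
        rw [norm_mul]
        exact mul_le_of_le_one_left (norm_nonneg _) (mod_cast Padic.norm_int_le_one 2)
    _ ≤ _ := Padic.norm_le_inv_pow_of_sq_le ((norm_re_sq_le_norm_redNorm hℓ x).trans hx)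

theorem two_mul_re_trace_sub {ℓ : ℕ} [Fact ℓ.Prime] {g : ℕ} (A : Matrix (Fin g) (Fin g) (Dquat ℓ)) :
    (2 * (∑ s, A s s).re : ℚ_[ℓ]) - 2 * g = ∑ s, 2 * ((A - 1) s s).re := by
  have hsum : (∑ s, A s s).re = ∑ s, (A s s).re :=
    map_sum (QuaternionAlgebra.reₗ (R := ℚ_[ℓ]) (c₁ := -1) (c₂ := 0) (c₃ := -(ℓ : ℚ_[ℓ]))) _ _
  have hdiag (s : Fin g) : ((A - 1) s s).re = (A s s).re - 1 := by
    rw [Matrix.sub_apply, Matrix.one_apply_eq]; rfl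
  simp only [hsum, hdiag, mul_sum, mul_sub, sum_sub_distrib, sum_const, card_univ, Fintype.card_fin,
    nsmul_eq_mul, mul_one]
  ring

theorem quaternion_congruence_trace_general
    (ℓ : ℕ) [Fact ℓ.Prime] (hl4 : ℓ % 4 = 3)
    (g i : ℕ)
    (A : Matrix (Fin g) (Fin g) (Dquat ℓ))
    (hcong : ∀ s t, ‖redNorm ℓ ((A - 1) s t)‖ ≤ ((ℓ : ℝ)⁻¹) ^ i) :
    ‖(2 * (∑ s, A s s).re : ℚ_[ℓ]) - (2 * g : ℚ_[ℓ])‖ ≤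
      ((ℓ : ℝ)⁻¹) ^ ((i + 1) / 2) := by
  rw [two_mul_re_trace_sub]
  exact IsUltrametricDist.norm_sum_le_of_forall_le_of_nonneg (by positivity)
    fun s _ => norm_two_mul_re_le hl4 (hcong s s)

/-- **traces along the congruence filtration.**
Let `ℓ ≡ −1 (mod 4)` be a prime, `D` the quaternion algebra over `ℚ` ramified at
`ℓ` and `∞` (locally `i² = −1`, `j² = −ℓ`), and `O_{D,ℓ}` its unique maximal
order, characterized as the set of elements of integral reduced norm; the
two-sided ideal `ϖ^i O_{D,ℓ}` consists of the elements whose reduced norm lies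
in `ℓ^i ℤ_ℓ`.  For `i > 0`, `H(i)` consists of the unitary matrices
`A ∈ M_g(O_{D,ℓ})` (i.e. `Āᵗ A = 1`, entries of integral reduced norm) with
`A ≡ 1 mod ϖ^i O_{D,ℓ}`.  Then the reduced trace of every element of `H(i)`
lies in `2g + ℓ^{⌈i/2⌉}·ℤ_ℓ`. -/
theorem quaternion_congruence_trace
    (ℓ : ℕ) [Fact ℓ.Prime] (hl4 : ℓ % 4 = 3)
    (g i : ℕ) (hi : 0 < i)
    (A : Matrix (Fin g) (Fin g) (Dquat ℓ))
    (hunit : A.conjTranspose * A = 1)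
    (hO : ∀ s t, ‖redNorm ℓ (A s t)‖ ≤ 1)
    (hcong : ∀ s t, ‖redNorm ℓ ((A - 1) s t)‖ ≤ ((ℓ : ℝ)⁻¹) ^ i) :
    ‖(2 * (∑ s, A s s).re : ℚ_[ℓ]) - (2 * g : ℚ_[ℓ])‖ ≤
      ((ℓ : ℝ)⁻¹) ^ ((i + 1) / 2) :=
  quaternion_congruence_trace_general ℓ hl4 g i A hcong

end
end

section
/- Let X be a d-dimensional simplicial complex such that the down-up random walk on X(k−1) within each vertex link X_i has second singular value at most 1/√k, and let F : X(k) → Σ^k satisfy: for a vertex i, with p_i := Pr over B ∼ X_i(√k − 1) and A, A' ⊇ B in X_i(k−1) of the event F[A∪{i}]|_i ≠ F[A'∪{i}]|_i, we have p_i ≤ √(6δ). Then there exists σ ∈ Σ such that Pr over A ∼ X_i(k−1) of F[A∪{i}]|_i = σ is at least 1 − O(√δ). -/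
open Finset
open scoped Classical

/-!
The indicator of a label class `{c = σ}` has variance `π_σ (1 - π_σ)`. The spectral bound
`ρ = 1/√k ≤ 1/2` gives a Poincaré inequality, so the walk leaves or enters the class with
probability at least `2 (1 - ρ) π_σ (1 - π_σ) ≥ π_σ (1 - π_σ)`. Summed over `σ`, these
crossings count every label change twice, hence `∑_σ π_σ (1 - π_σ) ≤ 2p`. As `∑_σ π_σ = 1`,
the largest class has `1 - max_σ π_σ ≤ ∑_σ π_σ (1 - π_σ) ≤ 2√(6δ) ≤ 5√δ`.
-/

theorem Finset.exists_one_sub_le_of_sum_mul_one_sub_le {ι : Type*} {T : Finset ι} {p : ι → ℝ}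
    {ε : ℝ} (hp : ∀ i ∈ T, 0 ≤ p i) (hsum : ∑ i ∈ T, p i = 1)
    (hε : ∑ i ∈ T, p i * (1 - p i) ≤ ε) : ∃ i ∈ T, 1 - ε ≤ p i := by
  have hT : T.Nonempty := nonempty_of_sum_ne_zero (by rw [hsum]; exact one_ne_zero)
  obtain ⟨i, hiT, hmax⟩ := T.exists_max_image p hT
  refine ⟨i, hiT, ?_⟩
  have : ∑ j ∈ T, p j * (1 - p i) ≤ ∑ j ∈ T, p j * (1 - p j) :=
    sum_le_sum fun j hj => mul_le_mul_of_nonneg_left (by linarith [hmax j hj]) (hp j hj)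
  rw [← sum_mul, hsum, one_mul] at this
  linarith

section DownUpWalk

variable {Ω : Type*} [Fintype Ω]

def dirichletForm (w : Ω → Ω → ℝ) (f : Ω → ℝ) : ℝ :=
  ∑ A, ∑ A', w A A' * (f A - f A') ^ 2

def weightedVariance (ν : Ω → ℝ) (f : Ω → ℝ) : ℝ :=
  ∑ A, ν A * (f A - ∑ B, ν B * f B) ^ 2

theorem dirichletForm_sub_const (w : Ω → Ω → ℝ) (f : Ω → ℝ) (m : ℝ) :
    dirichletForm w (fun A => f A - m) = dirichletForm w f := by
  simp only [dirichletForm, sub_sub_sub_cancel_right]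

variable {ν : Ω → ℝ} {w : Ω → Ω → ℝ}

theorem dirichletForm_eq (hrow : ∀ A, ∑ A', w A A' = ν A) (hcol : ∀ A', ∑ A, w A A' = ν A')
    (f : Ω → ℝ) :
    dirichletForm w f = 2 * ∑ A, ν A * f A ^ 2 - 2 * ∑ A, ∑ A', w A A' * f A * f A' := by
  have hleft : ∑ A, ∑ A', w A A' * f A ^ 2 = ∑ A, ν A * f A ^ 2 := by
    simp only [← sum_mul, hrow]
  have hright : ∑ A, ∑ A', w A A' * f A' ^ 2 = ∑ A, ν A * f A ^ 2 := by
    rw [sum_comm]; simp only [← sum_mul, hcol]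
  have hexpand : ∀ A A', w A A' * (f A - f A') ^ 2
      = w A A' * f A ^ 2 + w A A' * f A' ^ 2 - 2 * (w A A' * f A * f A') := fun A A' => by ring
  simp only [dirichletForm, hexpand, sum_sub_distrib, sum_add_distrib, ← mul_sum, hleft, hright]
  ring

theorem weightedVariance_eq (hν : ∑ A, ν A = 1) (f : Ω → ℝ) :
    weightedVariance ν f = ∑ A, ν A * f A ^ 2 - (∑ A, ν A * f A) ^ 2 := by
  have hexpand : ∀ A, ν A * (f A - ∑ B, ν B * f B) ^ 2
      = ν A * f A ^ 2 - 2 * (∑ B, ν B * f B) * (ν A * f A) + (∑ B, ν B * f B) ^ 2 * ν A :=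
    fun A => by ring
  simp only [weightedVariance, hexpand, sum_add_distrib, sum_sub_distrib, ← mul_sum, hν]
  ring

theorem weightedVariance_nonneg (hν : ∀ A, 0 ≤ ν A) (f : Ω → ℝ) : 0 ≤ weightedVariance ν f :=
  sum_nonneg fun A _ => mul_nonneg (hν A) (sq_nonneg _)

theorem weightedVariance_indicator (hν : ∑ A, ν A = 1) (p : Ω → Prop) :
    weightedVariance ν (fun A => if p A then 1 else 0)
      = (∑ A ∈ univ.filter p, ν A) * (1 - ∑ A ∈ univ.filter p, ν A) := by
  have hmean : ∑ A, ν A * (if p A then (1 : ℝ) else 0) = ∑ A ∈ univ.filter p, ν A := by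
    simp only [mul_ite, mul_one, mul_zero, sum_filter]
  have hsq : ∀ A, (if p A then (1 : ℝ) else 0) ^ 2 = if p A then 1 else 0 := fun A => by
    split_ifs <;> norm_num
  rw [weightedVariance_eq hν, hmean]
  simp only [hsq, hmean]
  ring

/-- Poincaré inequality for a walk whose nontrivial spectrum lies in `[-ρ, ρ]`. -/
theorem weightedVariance_le_dirichletForm (hν : ∑ A, ν A = 1)
    (hrow : ∀ A, ∑ A', w A A' = ν A) (hcol : ∀ A', ∑ A, w A A' = ν A') {ρ : ℝ}
    (hρ : ∀ g : Ω → ℝ, ∑ A, ν A * g A = 0 →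
      |∑ A, ∑ A', w A A' * g A * g A'| ≤ ρ * ∑ A, ν A * g A ^ 2)
    (f : Ω → ℝ) : 2 * (1 - ρ) * weightedVariance ν f ≤ dirichletForm w f := by
  set m := ∑ B, ν B * f B
  have hcentered : ∑ A, ν A * (f A - m) = 0 := by
    simp only [mul_sub, sum_sub_distrib, ← sum_mul, hν, one_mul, m, sub_self]
  have hgap := (le_abs_self _).trans (hρ _ hcentered)
  rw [← dirichletForm_sub_const w f m, dirichletForm_eq hrow hcol]
  change 2 * (1 - ρ) * ∑ A, ν A * (f A - m) ^ 2 ≤ _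
  linarith

end DownUpWalk

theorem sum_sq_sub_indicator_eq {Ω Λ : Type*} (c : Ω → Λ) {T : Finset Λ} {A A' : Ω}
    (hA : c A ∈ T) (hA' : c A' ∈ T) :
    ∑ σ ∈ T, ((if c A = σ then (1 : ℝ) else 0) - if c A' = σ then 1 else 0) ^ 2
      = 2 * if c A = c A' then 0 else 1 := by
  by_cases h : c A = c A'
  · simp [h]
  have hsplit : ∀ σ, ((if c A = σ then (1 : ℝ) else 0) - if c A' = σ then 1 else 0) ^ 2
      = (if c A = σ then 1 else 0) + if c A' = σ then 1 else 0 := fun σ => by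
    split_ifs <;> simp_all
  simp only [hsplit, sum_add_distrib, sum_ite_eq, hA, hA', h]
  norm_num

theorem sum_dirichletForm_indicator {Ω Λ : Type*} [Fintype Ω] (w : Ω → Ω → ℝ) (c : Ω → Λ) :
    ∑ σ ∈ univ.image c, dirichletForm w (fun A => if c A = σ then 1 else 0)
      = 2 * ∑ A, ∑ A', w A A' * (if c A = c A' then (0 : ℝ) else 1) := by
  simp only [dirichletForm]
  rw [sum_comm]
  simp only [mul_sum]
  refine sum_congr rfl fun A _ => ?_
  rw [sum_comm]
  refine sum_congr rfl fun A' _ => ?_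
  rw [← mul_sum, sum_sq_sub_indicator_eq c (mem_image_of_mem c (mem_univ A))
    (mem_image_of_mem c (mem_univ A'))]
  ring

theorem two_mul_sqrt_six_mul_le (δ : ℝ) : 2 * Real.sqrt (6 * δ) ≤ 5 * Real.sqrt δ := by
  have hsqrt6 : Real.sqrt 6 ≤ 5 / 2 := (Real.sqrt_le_left (by norm_num)).2 (by norm_num)
  rw [Real.sqrt_mul (by norm_num)]
  nlinarith [Real.sqrt_nonneg δ]

/-- **majority decoding from a spectral walk.**
There is a universal constant `C` such that the following holds.  Let `Ω` be the
set of `(k−1)`-faces of the link of a vertex `i`, with measure `ν`, and let `w`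
be the joint distribution of the down-up walk on `Ω` (both marginals equal `ν`),
whose second singular value is at most `1/√k` (hypothesis `hwalk`).  Let
`c : Ω → Λ` record the label `F[A ∪ {i}]|_i` of each face `A`, and let
`p = Pr_{(A,A') ∼ w}[c A ≠ c A']` satisfy `p ≤ √(6δ)`.  Then there exists
`σ ∈ Λ` such that `Pr_{A ∼ ν}[c A = σ] ≥ 1 − C·√δ`. -/
theorem walk_majority_decoding :
    ∃ C : ℝ, 0 < C ∧
    ∀ (Ω Λ : Type) (_ : Fintype Ω) (ν : Ω → ℝ) (w : Ω → Ω → ℝ)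
      (c : Ω → Λ) (k δ : ℝ),
      (∀ A, 0 ≤ ν A) → (∑ A, ν A = 1) →
      (∀ A A', 0 ≤ w A A') →
      (∀ A, ∑ A', w A A' = ν A) → (∀ A', ∑ A, w A A' = ν A') →
      (4 : ℝ) ≤ k → 0 ≤ δ →
      (∀ f : Ω → ℝ, (∑ A, ν A * f A = 0) →
        |∑ A, ∑ A', w A A' * f A * f A'| ≤
          (1 / Real.sqrt k) * ∑ A, ν A * (f A) ^ 2) →
      (∑ A, ∑ A', w A A' * (if c A = c A' then (0 : ℝ) else 1)) ≤
        Real.sqrt (6 * δ) →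
      ∃ σ : Λ, 1 - C * Real.sqrt δ ≤
        ∑ A ∈ Finset.univ.filter (fun A => c A = σ), ν A := by
  refine ⟨5, by norm_num, ?_⟩
  intro Ω Λ _ ν w c k δ hν hνsum _ hrow hcol hk _ hwalk hp
  set π : Λ → ℝ := fun σ => ∑ A ∈ univ.filter (fun A => c A = σ), ν A
  have hρ : 1 / Real.sqrt k ≤ 1 / 2 :=
    one_div_le_one_div_of_le two_pos ((Real.le_sqrt zero_le_two (by linarith)).2 (by linarith))
  have hmass : ∑ σ ∈ univ.image c, π σ * (1 - π σ) ≤ 2 * Real.sqrt (6 * δ) := calc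
    _ = ∑ σ ∈ univ.image c, weightedVariance ν (fun A => if c A = σ then 1 else 0) := by
      simp only [weightedVariance_indicator hνsum, π]
    _ ≤ ∑ σ ∈ univ.image c, dirichletForm w (fun A => if c A = σ then 1 else 0) :=
      sum_le_sum fun σ _ => by
        have hvar := weightedVariance_nonneg hν (fun A => if c A = σ then (1 : ℝ) else 0)
        nlinarith [weightedVariance_le_dirichletForm hνsum hrow hcol hwalk
          (fun A => if c A = σ then 1 else 0)]
    _ ≤ 2 * Real.sqrt (6 * δ) := by rw [sum_dirichletForm_indicator]; linarith
  obtain ⟨σ, -, hσ⟩ := exists_one_sub_le_of_sum_mul_one_sub_le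
    (fun σ _ => sum_nonneg fun A _ => hν A)
    ((sum_fiberwise_of_maps_to (fun A _ => mem_image_of_mem c (mem_univ A)) ν).trans hνsum) hmass
  exact ⟨σ, by linarith [two_mul_sqrt_six_mul_le δ]⟩
end

section
/- Let L be a complex on which a group Sym(L) acts transitively on top faces, let i, j be colors with the bipartite graph (L_i(1), L_j(1)) having diameter at most ℓ, and suppose an iterative shortest-path algorithm constructs paths of length at most ℓ between pairs (u,v) ∈ L_i(1) × L_j(1), deleting any edge used in at least t = Θ(|L_i(1)||L_j(1)| / (ε³|L_{ij}(2)|)) paths. Then the total number of deleted edges is at most |L_i(1)||L_j(1)|·ℓ/t = Θ(ε²·|L_{ij}(2)|), and by transitivity of the symmetric action the algorithm outputs valid paths (length ≤ ℓ, no deleted edge) for at least a 1 − O(ε) fraction of pairs (u,v). -/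
/-!
Fix a walk of length at most `ℓ` for every pair and give each pair `p` the translate
`a • B (a⁻¹ • p)` of its base walk `B`, with `a ∈ Gp` chosen independently and uniformly for every
pair. By edge-transitivity all edges then have the same expected congestion, at most
`|SA| |SB| ℓ / |E|`. Delete the edges used by more than `t` pairs (at most `|SA| |SB| ℓ / t` of
them). A pair whose walk meets a deleted edge shares it with at least `t` other pairs, so `t` times
the number of invalid pairs is at most the number of collisions (pairs of distinct pairs together
with an edge both walks use). By pairwise independence the expected number of collisions is at most
`∑ₑ (expected congestion)² ≤ (|SA| |SB| ℓ)² / |E| ≤ ε² t |SA| |SB| ℓ`, so some choice leaves at most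
`ε² ℓ |SA| |SB| ≤ ε |SA| |SB|` invalid pairs.
-/

open Finset
open scoped Classical Pointwise

theorem Fintype.sum_apply_mul_apply {ι α R : Type*} [Fintype ι] [DecidableEq ι] [Fintype α]
    [CommSemiring R] {p q : ι} (hpq : p ≠ q) (F H : α → R) :
    ∑ ω : ι → α, F (ω p) * H (ω q) =
      (Fintype.card α : R) ^ (Fintype.card ι - 2) * ((∑ a, F a) * ∑ a, H a) := by
  let f : ι → α → R := fun i x => (if i = p then F x else 1) * (if i = q then H x else 1)
  have hprod (ω : ι → α) : ∏ i, f i (ω i) = F (ω p) * H (ω q) := by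
    simp only [f, prod_mul_distrib, Fintype.prod_ite_eq']
  have hq : q ∈ univ.erase p := mem_erase.2 ⟨hpq.symm, mem_univ q⟩
  have hrest : ∀ i ∈ (univ.erase p).erase q, ∑ x, f i x = Fintype.card α := by
    intro i hi
    simp [f, (mem_erase.1 hi).1, (mem_erase.1 (mem_erase.1 hi).2).1]
  rw [← Fintype.sum_congr _ _ hprod, ← Fintype.prod_sum, ← mul_prod_erase _ _ (mem_univ p),
    ← mul_prod_erase _ _ hq, prod_eq_pow_card hrest, card_erase_of_mem hq,
    card_erase_of_mem (mem_univ p), card_univ, Nat.sub_sub]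
  simp only [f, if_true, if_neg hpq, if_neg hpq.symm, mul_one, one_mul]
  ring

section Congestion

variable {ι α β : Type*} [DecidableEq β] (S : α → ι → Finset β) (s : Finset ι)

def congestion (ω : ι → α) (e : β) : ℕ := #{q ∈ s | e ∈ S (ω q) q}

def overloaded (t : ℕ) (ω : ι → α) : Finset ι :=
  {p ∈ s | ∃ e ∈ S (ω p) p, t < congestion S s ω e}

def collisions [DecidableEq ι] (ω : ι → α) : ℕ :=
  ∑ p ∈ s, ∑ q ∈ s.erase p, #(S (ω p) p ∩ S (ω q) q)

variable {S s}

theorem le_sum_card_inter_of_mem_overloaded [DecidableEq ι] {t : ℕ} {ω : ι → α} {p : ι}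
    (hp : p ∈ overloaded S s t ω) :
    t ≤ ∑ q ∈ s.erase p, #(S (ω p) p ∩ S (ω q) q) := by
  obtain ⟨hps, e, he, hte⟩ := mem_filter.1 hp
  have hcard : #{q ∈ s | e ∈ S (ω q) q} = #{q ∈ s.erase p | e ∈ S (ω q) q} + 1 := by
    rw [filter_erase, card_erase_add_one (mem_filter.2 ⟨hps, he⟩)]
  calc t ≤ #{q ∈ s.erase p | e ∈ S (ω q) q} := by
        unfold congestion at hte; omega
    _ = ∑ q ∈ s.erase p, #({e} ∩ S (ω q) q) := by
        rw [card_filter]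
        refine sum_congr rfl fun q _ => ?_
        split_ifs with h <;> simp [h]
    _ ≤ ∑ q ∈ s.erase p, #(S (ω p) p ∩ S (ω q) q) :=
        sum_le_sum fun q _ => card_le_card (inter_subset_inter_right (singleton_subset_iff.2 he))

theorem mul_card_overloaded_le_collisions [DecidableEq ι] (t : ℕ) (ω : ι → α) :
    t * #(overloaded S s t ω) ≤ collisions S s ω :=
  calc t * #(overloaded S s t ω) = ∑ _p ∈ overloaded S s t ω, t := by
        rw [sum_const, smul_eq_mul, mul_comm]
    _ ≤ ∑ p ∈ overloaded S s t ω, ∑ q ∈ s.erase p, #(S (ω p) p ∩ S (ω q) q) :=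
        sum_le_sum fun _ hp => le_sum_card_inter_of_mem_overloaded hp
    _ ≤ collisions S s ω := sum_le_sum_of_subset (filter_subset _ _)

theorem sum_congestion [Fintype β] (ω : ι → α) :
    ∑ e, congestion S s ω e = ∑ p ∈ s, #(S (ω p) p) := by
  simp_rw [congestion, card_eq_sum_ones, sum_filter]
  rw [sum_comm]
  simp

theorem mul_card_filter_lt_congestion_le [Fintype β] {ℓ : ℕ} {ω : ι → α}
    (hℓ : ∀ p ∈ s, #(S (ω p) p) ≤ ℓ) (E : Finset β) (t : ℕ) :
    t * #{e ∈ E | t < congestion S s ω e} ≤ #s * ℓ :=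
  calc t * #{e ∈ E | t < congestion S s ω e}
      ≤ ∑ e ∈ E with t < congestion S s ω e, congestion S s ω e := by
        rw [mul_comm, ← smul_eq_mul]
        exact card_nsmul_le_sum _ _ _ fun e he => (mem_filter.1 he).2.le
    _ ≤ ∑ e, congestion S s ω e := sum_le_sum_of_subset (subset_univ _)
    _ ≤ ∑ _p ∈ s, ℓ := (sum_congestion ω).trans_le (sum_le_sum hℓ)
    _ = #s * ℓ := by rw [sum_const, smul_eq_mul]

variable [Fintype α]

/-- `load S s e / card α` is the expected congestion of `e` when every `ω p` is uniform. -/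
def load (S : α → ι → Finset β) (s : Finset ι) (e : β) : ℕ := ∑ p ∈ s, #{a | e ∈ S a p}

theorem card_sq_mul_sum_card_inter [Fintype ι] [DecidableEq ι] [Fintype β] {p q : ι}
    (hpq : p ≠ q) :
    Fintype.card α ^ 2 * ∑ ω : ι → α, #(S (ω p) p ∩ S (ω q) q) =
      Fintype.card α ^ Fintype.card ι * ∑ e, #{a | e ∈ S a p} * #{a | e ∈ S a q} := by
  have hcard : 2 ≤ Fintype.card ι := by
    simpa [card_pair hpq] using card_le_univ {p, q}
  have hinter (ω : ι → α) : #(S (ω p) p ∩ S (ω q) q) =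
      ∑ e, (if e ∈ S (ω p) p then 1 else 0) * (if e ∈ S (ω q) q then 1 else 0) := by
    simp_rw [ite_zero_mul_ite_zero, mul_one, sum_boole, Nat.cast_id, ← mem_inter,
      filter_univ_mem]
  simp_rw [hinter]
  rw [sum_comm, mul_sum, mul_sum]
  refine sum_congr rfl fun e _ => ?_
  rw [Fintype.sum_apply_mul_apply hpq (fun a => if e ∈ S a p then 1 else 0)
    (fun a => if e ∈ S a q then 1 else 0), Nat.cast_id, ← mul_assoc, ← pow_add,
    Nat.add_sub_cancel' hcard]
  simp_rw [sum_boole, Nat.cast_id]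

theorem card_sq_mul_sum_collisions_le [Fintype ι] [DecidableEq ι] [Fintype β] :
    Fintype.card α ^ 2 * ∑ ω, collisions S s ω ≤
      Fintype.card α ^ Fintype.card ι * ∑ e, load S s e ^ 2 := by
  calc Fintype.card α ^ 2 * ∑ ω, collisions S s ω
      = ∑ p ∈ s, ∑ q ∈ s.erase p,
          Fintype.card α ^ 2 * ∑ ω : ι → α, #(S (ω p) p ∩ S (ω q) q) := by
        simp_rw [collisions, mul_sum]
        rw [sum_comm]
        simp_rw [sum_comm (s := univ)]
    _ = ∑ p ∈ s, ∑ q ∈ s.erase p, Fintype.card α ^ Fintype.card ι *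
          ∑ e, #{a | e ∈ S a p} * #{a | e ∈ S a q} :=
        sum_congr rfl fun p _ => sum_congr rfl fun q hq =>
          card_sq_mul_sum_card_inter (ne_of_mem_erase hq).symm
    _ ≤ ∑ p ∈ s, ∑ q ∈ s, Fintype.card α ^ Fintype.card ι *
          ∑ e, #{a | e ∈ S a p} * #{a | e ∈ S a q} :=
        sum_le_sum fun p _ => sum_le_sum_of_subset (erase_subset _ _)
    _ = Fintype.card α ^ Fintype.card ι * ∑ e, load S s e ^ 2 := by
        simp_rw [load, sq, sum_mul_sum, mul_sum]
        exact (sum_comm.trans (sum_congr rfl fun _ _ => sum_comm)).symm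

theorem sum_load_le [Fintype β] {ℓ : ℕ} (hℓ : ∀ a, ∀ p ∈ s, #(S a p) ≤ ℓ) :
    ∑ e, load S s e ≤ Fintype.card α * (#s * ℓ) :=
  calc ∑ e, load S s e = ∑ p ∈ s, ∑ a, #(S a p) := by
        simp_rw [load, card_eq_sum_ones, sum_filter]
        rw [sum_comm]
        exact sum_congr rfl fun p _ => sum_comm.trans (by simp)
    _ ≤ ∑ _p ∈ s, ∑ _a : α, ℓ := sum_le_sum fun p hp => sum_le_sum fun a _ => hℓ a p hp
    _ = Fintype.card α * (#s * ℓ) := by simp [card_univ]; ring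

theorem exists_mul_card_overloaded_le [Fintype ι] [DecidableEq ι] [Fintype β] [Nonempty α]
    {ℓ m L : ℕ} (hℓ : ∀ a, ∀ p ∈ s, #(S a p) ≤ ℓ)
    (hload : ∀ e, m * load S s e ≤ Fintype.card α * L) (t : ℕ) :
    ∃ ω, m * t * #(overloaded S s t ω) ≤ L * (#s * ℓ) := by
  have hsq : m * ∑ e, load S s e ^ 2 ≤ Fintype.card α ^ 2 * (L * (#s * ℓ)) :=
    calc m * ∑ e, load S s e ^ 2 = ∑ e, m * load S s e * load S s e := by
          rw [mul_sum]
          simp_rw [sq, mul_assoc]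
      _ ≤ ∑ e, Fintype.card α * L * load S s e :=
          sum_le_sum fun e _ => Nat.mul_le_mul_right _ (hload e)
      _ ≤ Fintype.card α * L * (Fintype.card α * (#s * ℓ)) := by
          rw [← mul_sum]
          exact Nat.mul_le_mul_left _ (sum_load_le hℓ)
      _ = Fintype.card α ^ 2 * (L * (#s * ℓ)) := by ring
  have hmean : m * ∑ ω, collisions S s ω ≤ ∑ _ω : ι → α, L * (#s * ℓ) := by
    refine le_of_mul_le_mul_left ?_ (pow_pos Fintype.card_pos 2 : 0 < Fintype.card α ^ 2)
    calc Fintype.card α ^ 2 * (m * ∑ ω, collisions S s ω)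
        = m * (Fintype.card α ^ 2 * ∑ ω, collisions S s ω) := by ring
      _ ≤ m * (Fintype.card α ^ Fintype.card ι * ∑ e, load S s e ^ 2) :=
          Nat.mul_le_mul_left m card_sq_mul_sum_collisions_le
      _ ≤ Fintype.card α ^ Fintype.card ι * (Fintype.card α ^ 2 * (L * (#s * ℓ))) := by
          rw [mul_left_comm]
          gcongr
      _ = Fintype.card α ^ 2 * ∑ _ω : ι → α, L * (#s * ℓ) := by
          rw [sum_const, card_univ, Fintype.card_fun, smul_eq_mul]
          ring
  rw [mul_sum] at hmean
  obtain ⟨ω, -, hω⟩ := exists_le_of_sum_le univ_nonempty hmean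
  exact ⟨ω, (mul_assoc m _ _).trans_le
    ((Nat.mul_le_mul_left m (mul_card_overloaded_le_collisions t ω)).trans hω)⟩

end Congestion

section Translate

variable {H ι β : Type*} [Group H] [MulAction H β]

theorem sum_comp_smul_of_smul_mem_iff {M : Type*} [AddCommMonoid M] {E : Finset β}
    (hE : ∀ (a : H) x, a • x ∈ E ↔ x ∈ E) (f : β → M) (a : H) :
    ∑ x ∈ E, f (a • x) = ∑ x ∈ E, f x :=
  sum_nbij' (a • ·) (a⁻¹ • ·) (fun x hx => (hE _ x).2 hx) (fun x hx => (hE _ x).2 hx)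
    (fun x _ => inv_smul_smul a x) (fun x _ => smul_inv_smul a x) fun _ _ => rfl

variable [Fintype H]

theorem sum_inv_smul_eq_of_exists_smul_eq {M : Type*} [AddCommMonoid M] {E : Finset β}
    (htrans : ∀ x ∈ E, ∀ y ∈ E, ∃ a : H, a • x = y) (f : β → M) {x y : β}
    (hx : x ∈ E) (hy : y ∈ E) : ∑ a : H, f (a⁻¹ • y) = ∑ a : H, f (a⁻¹ • x) := by
  obtain ⟨h, rfl⟩ := htrans x hx y hy
  rw [← Equiv.sum_comp (Equiv.mulLeft h)]
  simp [mul_smul]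

theorem card_smul_sum_inv_smul_eq {M : Type*} [AddCommMonoid M] {E : Finset β}
    (hE : ∀ (a : H) x, a • x ∈ E ↔ x ∈ E) (htrans : ∀ x ∈ E, ∀ y ∈ E, ∃ a : H, a • x = y)
    (f : β → M) {e : β} (he : e ∈ E) :
    #E • ∑ a : H, f (a⁻¹ • e) = Fintype.card H • ∑ x ∈ E, f x :=
  calc #E • ∑ a : H, f (a⁻¹ • e) = ∑ x ∈ E, ∑ a : H, f (a⁻¹ • x) := by
        rw [← sum_const]
        exact sum_congr rfl fun x hx => sum_inv_smul_eq_of_exists_smul_eq htrans f hx he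
    _ = Fintype.card H • ∑ x ∈ E, f x := by
        rw [sum_comm, sum_congr rfl fun a _ => sum_comp_smul_of_smul_mem_iff hE f a⁻¹,
          sum_const, card_univ]

variable [MulAction H ι] [DecidableEq β]

def translateFamily (S₀ : ι → Finset β) (a : H) (p : ι) : Finset β := a • S₀ (a⁻¹ • p)

variable {s : Finset ι} {S₀ : ι → Finset β}

theorem load_translateFamily (hs : ∀ (a : H) p, a • p ∈ s ↔ p ∈ s) (e : β) :
    load (translateFamily S₀ : H → ι → Finset β) s e =
      ∑ a : H, #{p ∈ s | a⁻¹ • e ∈ S₀ p} := by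
  simp_rw [load, translateFamily, ← inv_smul_mem_iff, card_eq_sum_ones, sum_filter]
  rw [sum_comm]
  exact sum_congr rfl fun a _ =>
    sum_comp_smul_of_smul_mem_iff hs (fun p => if a⁻¹ • e ∈ S₀ p then 1 else 0) a⁻¹

theorem card_mul_load_translateFamily_le {E : Finset β} (hE : ∀ (a : H) x, a • x ∈ E ↔ x ∈ E)
    (htrans : ∀ x ∈ E, ∀ y ∈ E, ∃ a : H, a • x = y) (hs : ∀ (a : H) p, a • p ∈ s ↔ p ∈ s)
    (hS₀ : ∀ p ∈ s, S₀ p ⊆ E) (e : β) :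
    #E * load (translateFamily S₀ : H → ι → Finset β) s e ≤
      Fintype.card H * ∑ p ∈ s, #(S₀ p) := by
  rw [load_translateFamily (S₀ := S₀) hs e]
  by_cases he : e ∈ E
  · rw [← smul_eq_mul, card_smul_sum_inv_smul_eq hE htrans (fun x => #{p ∈ s | x ∈ S₀ p}) he,
      smul_eq_mul]
    gcongr
    calc ∑ x ∈ E, #{p ∈ s | x ∈ S₀ p} = ∑ p ∈ s, #{x ∈ E | x ∈ S₀ p} := by
          simp_rw [card_eq_sum_ones, sum_filter]
          exact sum_comm
      _ ≤ ∑ p ∈ s, #(S₀ p) := sum_le_sum fun p hp => card_le_card fun x hx => (mem_filter.1 hx).2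
  · have hzero (a : H) : #{p ∈ s | a⁻¹ • e ∈ S₀ p} = 0 :=
      card_eq_zero.2 (filter_false_of_mem fun p hp hmem => he ((hE _ e).1 (hS₀ p hp hmem)))
    simp [hzero]

end Translate

instance Sym2.instMulAction {M α : Type*} [Monoid M] [MulAction M α] : MulAction M (Sym2 α) where
  smul a := Sym2.map (a • ·)
  one_smul e := by
    change Sym2.map (fun x => (1 : M) • x) e = e
    simp
  mul_smul a b e := by
    change Sym2.map (fun x => (a * b) • x) e = Sym2.map (a • ·) (Sym2.map (b • ·) e)
    simp [Sym2.map_map, mul_smul]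

namespace SimpleGraph

variable {V H : Type*} {G : SimpleGraph V}

theorem smul_mem_edgeSet_iff [Monoid H] [MulAction H V]
    (hG : ∀ (a : H) u v, G.Adj (a • u) (a • v) ↔ G.Adj u v) (a : H) (e : Sym2 V) :
    a • e ∈ G.edgeSet ↔ e ∈ G.edgeSet := by
  induction e using Sym2.ind with
  | h u v => exact hG a u v

theorem Walk.edgeFinset_nonempty [Fintype G.edgeSet] {u v : V} (w : G.Walk u v) (huv : u ≠ v) :
    G.edgeFinset.Nonempty := by
  cases w with
  | nil => exact absurd rfl huv
  | cons h _ => exact ⟨s(u, _), mem_edgeFinset.2 (G.mem_edgeSet.2 h)⟩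

section

variable [DecidableEq V] {ℓ : ℕ} {s : Finset (V × V)} {S : V × V → Finset (Sym2 V)}

variable (G ℓ s S) in
def ShortWalkEdges : Prop :=
  ∀ p ∈ s, ∃ w : G.Walk p.1 p.2, w.length ≤ ℓ ∧ w.edges.toFinset = S p

theorem exists_shortWalkEdges (hdiam : ∀ p ∈ s, ∃ w : G.Walk p.1 p.2, w.length ≤ ℓ) :
    ∃ S, G.ShortWalkEdges ℓ s S :=
  ⟨fun p => if hp : p ∈ s then (hdiam p hp).choose.edges.toFinset else ∅,
    fun p hp => ⟨_, (hdiam p hp).choose_spec, by simp [hp]⟩⟩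

namespace ShortWalkEdges

theorem card_le (h : G.ShortWalkEdges ℓ s S) {p : V × V} (hp : p ∈ s) : #(S p) ≤ ℓ := by
  obtain ⟨w, hw, hS⟩ := h p hp
  exact hS ▸ (List.toFinset_card_le _).trans (w.length_edges.trans_le hw)

theorem subset_edgeFinset [Fintype G.edgeSet] (h : G.ShortWalkEdges ℓ s S) {p : V × V}
    (hp : p ∈ s) : S p ⊆ G.edgeFinset := by
  obtain ⟨w, -, hS⟩ := h p hp
  intro e he
  exact mem_edgeFinset.2 (w.edges_subset_edgeSet (List.mem_toFinset.1 (hS ▸ he)))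

theorem translate [Group H] [MulAction H V]
    (hG : ∀ (a : H) u v, G.Adj (a • u) (a • v) ↔ G.Adj u v)
    (hs : ∀ (a : H) p, a • p ∈ s ↔ p ∈ s) (h : G.ShortWalkEdges ℓ s S) (a : H) :
    G.ShortWalkEdges ℓ s (translateFamily S a) := by
  intro p hp
  obtain ⟨w, hw, hS⟩ := h _ ((hs a⁻¹ p).2 hp)
  let φ : G →g G := ⟨(a • ·), (hG a _ _).2⟩
  refine ⟨(w.map φ).copy (smul_inv_smul a p.1) (smul_inv_smul a p.2), by simpa using hw, ?_⟩
  ext e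
  simp [translateFamily, ← hS, Finset.mem_smul_finset, φ]
  rfl

theorem exists_option_walks (h : G.ShortWalkEdges ℓ s S) (bad : Finset (V × V)) :
    ∃ P : (u v : V) → Option (G.Walk u v),
      (∀ u v (w : G.Walk u v), P u v = some w →
        (u, v) ∈ s ∧ (u, v) ∉ bad ∧ w.length ≤ ℓ ∧ ∀ e ∈ w.edges, e ∈ S (u, v)) ∧
      ∀ p ∈ s, P p.1 p.2 = none ↔ p ∈ bad := by
  refine ⟨fun u v => if hp : (u, v) ∈ s ∧ (u, v) ∉ bad then some (h _ hp.1).choose else none,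
    fun u v w hw => ?_, fun p hp => ?_⟩
  · dsimp only at hw
    split_ifs at hw with hp
    cases hw
    obtain ⟨hlen, hS⟩ := (h _ hp.1).choose_spec
    exact ⟨hp.1, hp.2, hlen, fun e he => hS ▸ List.mem_toFinset.2 he⟩
  · by_cases hbad : p ∈ bad <;> simp [hp, hbad]

theorem exists_walks_of_not_overloaded {α : Type*} {S : α → V × V → Finset (Sym2 V)}
    {ω : V × V → α} (h : G.ShortWalkEdges ℓ s fun p => S (ω p) p) (t : ℕ) :
    ∃ P : (u v : V) → Option (G.Walk u v),
      (∀ u v (w : G.Walk u v), P u v = some w →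
        w.length ≤ ℓ ∧ ∀ e ∈ w.edges, congestion S s ω e ≤ t) ∧
      (∀ e, #{p ∈ s | ∃ w, P p.1 p.2 = some w ∧ e ∈ w.edges} ≤ t) ∧
      {p ∈ s | P p.1 p.2 = none} = overloaded S s t ω := by
  obtain ⟨P, hPsome, hPnone⟩ := h.exists_option_walks (overloaded S s t ω)
  have hcong {u v : V} {w : G.Walk u v} (hw : P u v = some w) {e : Sym2 V} (he : e ∈ w.edges) :
      congestion S s ω e ≤ t := by
    obtain ⟨hs, hnb, -, hwS⟩ := hPsome u v w hw
    by_contra! hlt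
    exact hnb (mem_filter.2 ⟨hs, e, hwS e he, hlt⟩)
  refine ⟨P, fun u v w hw => ⟨(hPsome u v w hw).2.2.1, fun e he => hcong hw he⟩,
    fun e => ?_, ?_⟩
  · by_cases hne : {p ∈ s | ∃ w, P p.1 p.2 = some w ∧ e ∈ w.edges}.Nonempty
    · obtain ⟨p, hp⟩ := hne
      obtain ⟨-, w, hw, he⟩ := mem_filter.1 hp
      refine le_trans (card_le_card fun q hq => ?_) (hcong hw he)
      obtain ⟨hqs, w', hw', he'⟩ := mem_filter.1 hq
      exact mem_filter.2 ⟨hqs, (hPsome _ _ w' hw').2.2.2 e he'⟩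
    · simp [not_nonempty_iff_eq_empty.1 hne]
  · ext p
    have hps (hp : p ∈ overloaded S s t ω) : p ∈ s := (mem_filter.1 hp).1
    exact mem_filter.trans
      ⟨fun h => (hPnone p h.1).1 h.2, fun h => ⟨hps h, (hPnone p (hps h)).2 h⟩⟩

end ShortWalkEdges

end

variable [Fintype V] [DecidableEq V] [DecidableRel G.Adj] [Group H] [Fintype H] [MulAction H V]
  {ℓ : ℕ} {s : Finset (V × V)}

theorem exists_low_congestion_walks (hG : ∀ (a : H) u v, G.Adj (a • u) (a • v) ↔ G.Adj u v)
    (hs : ∀ (a : H) p, a • p ∈ s ↔ p ∈ s)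
    (htrans : ∀ e ∈ G.edgeFinset, ∀ e' ∈ G.edgeFinset, ∃ a : H, a • e = e')
    (hdiam : ∀ p ∈ s, ∃ w : G.Walk p.1 p.2, w.length ≤ ℓ) (t : ℕ) :
    ∃ Ebad ⊆ G.edgeFinset, t * #Ebad ≤ #s * ℓ ∧ ∃ P : (u v : V) → Option (G.Walk u v),
      (∀ u v (w : G.Walk u v), P u v = some w → w.length ≤ ℓ ∧ ∀ e ∈ w.edges, e ∉ Ebad) ∧
      (∀ e, #{p ∈ s | ∃ w, P p.1 p.2 = some w ∧ e ∈ w.edges} ≤ t) ∧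
      #G.edgeFinset * t * #{p ∈ s | P p.1 p.2 = none} ≤ (#s * ℓ) ^ 2 := by
  obtain ⟨S₀, hS₀⟩ := exists_shortWalkEdges hdiam
  set S : H → V × V → Finset (Sym2 V) := translateFamily S₀
  have hS (a : H) : G.ShortWalkEdges ℓ s (S a) := hS₀.translate hG hs a
  have hE (a : H) (e : Sym2 V) : a • e ∈ G.edgeFinset ↔ e ∈ G.edgeFinset := by
    simpa only [mem_edgeFinset] using smul_mem_edgeSet_iff hG a e
  obtain ⟨ω, hω⟩ := exists_mul_card_overloaded_le (fun a p hp => (hS a).card_le hp)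
    (card_mul_load_translateFamily_le hE htrans hs fun p hp => hS₀.subset_edgeFinset hp) t
  have hSω : G.ShortWalkEdges ℓ s (fun p => S (ω p) p) := fun p hp => hS (ω p) p hp
  obtain ⟨P, hvalid, hcong, hbad⟩ := hSω.exists_walks_of_not_overloaded t
  refine ⟨{e ∈ G.edgeFinset | t < congestion S s ω e}, filter_subset _ _,
    mul_card_filter_lt_congestion_le (fun p hp => hSω.card_le hp) _ t, P, fun u v w hw =>
      ⟨(hvalid u v w hw).1, fun e he hEb => (mem_filter.1 hEb).2.not_ge ((hvalid u v w hw).2 e he)⟩,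
    hcong, ?_⟩
  rw [hbad, sq]
  refine hω.trans (Nat.mul_le_mul_right _ ?_)
  exact (sum_le_card_nsmul _ _ _ fun p hp => hS₀.card_le hp).trans_eq (smul_eq_mul _ _)

end SimpleGraph

-- `G` is the bipartite graph `L_{ij}(2)` between `SA = L_i(1)` and `SB = L_j(1)`; the action of
-- `Sym(L)` enters only as `Gp` acting edge-transitively on `G`. `P u v = none` marks an invalid pair.
/-- **low-congestion short paths inside a link.**
There is a universal constant `C` such that the following holds.  Let `G` be the
bipartite graph between the colour classes `SA = L_i(1)` and `SB = L_j(1)` of a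
link `L` on which a symmetry group `Gp` acts transitively on top faces — hence
by colour-preserving graph automorphisms acting transitively on the edges
(`hedgetrans`) — and suppose every pair `(u, v) ∈ SA × SB` is joined by a path
of length at most `ℓ` (`hdiam`), where `ℓ = Θ(1/ε)` (`hℓε : ℓ·ε ≤ 1`).  Let
`t = Θ(|SA|·|SB|/(ε³·|E|))`, concretely large enough that
`|SA|·|SB|·ℓ ≤ ε²·t·|E|` (`ht`).  Then the iterative shortest-path algorithm —
which repeatedly picks a shortest surviving path between pairs and deletes any
edge used at least `t` times — produces a set `Ebad` of deleted edges with
`|Ebad| ≤ |SA|·|SB|·ℓ/t` (`= Θ(ε²·|E|)`) and a family of paths `P u v` such that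
every valid path has length at most `ℓ` and avoids `Ebad`, every edge is used
in at most `t` paths, and at most a `C·ε`-fraction of the pairs `(u, v)` get an
invalid path. -/
theorem link_path_construction :
    ∃ C : ℝ, 0 < C ∧
    ∀ (W : Type) (_ : Fintype W) (_ : DecidableEq W)
      (G : SimpleGraph W) (_ : DecidableRel G.Adj)
      (SA SB : Finset W) (ℓ t : ℕ) (ε : ℝ)
      (Gp : Subgroup (Equiv.Perm W)),
      0 < ε → 0 < t →
      SA.Nonempty → SB.Nonempty → Disjoint SA SB →
      (∀ u v, G.Adj u v → (u ∈ SA ∧ v ∈ SB) ∨ (u ∈ SB ∧ v ∈ SA)) →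
      (∀ u ∈ SA, ∀ v ∈ SB, ∃ wlk : G.Walk u v, wlk.length ≤ ℓ) →
      (∀ g ∈ Gp, ∀ u v, G.Adj u v ↔ G.Adj (g u) (g v)) →
      (∀ g ∈ Gp, ∀ u, u ∈ SA ↔ g u ∈ SA) →
      (∀ g ∈ Gp, ∀ u, u ∈ SB ↔ g u ∈ SB) →
      (∀ e ∈ G.edgeFinset, ∀ e' ∈ G.edgeFinset,
        ∃ g ∈ Gp, Sym2.map (⇑g) e = e') →
      ((SA.card : ℝ) * SB.card * ℓ ≤ ε ^ 2 * t * G.edgeFinset.card) →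
      ((ℓ : ℝ) * ε ≤ 1) →
      ∃ Ebad : Finset (Sym2 W), Ebad ⊆ G.edgeFinset ∧
        ((Ebad.card : ℝ) ≤ (SA.card : ℝ) * SB.card * ℓ / t) ∧
        ∃ P : (u v : W) → Option (G.Walk u v),
          (∀ u ∈ SA, ∀ v ∈ SB, ∀ wlk : G.Walk u v, P u v = some wlk →
            wlk.length ≤ ℓ ∧ ∀ e ∈ wlk.edges, e ∉ Ebad) ∧
          (∀ e : Sym2 W,
            (((SA ×ˢ SB).filter (fun uv =>
                ∃ wlk : G.Walk uv.1 uv.2, P uv.1 uv.2 = some wlk ∧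
                  e ∈ wlk.edges)).card : ℝ) ≤ t) ∧
          ((((SA ×ˢ SB).filter (fun uv => P uv.1 uv.2 = none)).card : ℝ) ≤
            C * ε * ((SA.card : ℝ) * SB.card)) := by
  refine ⟨1, one_pos, ?_⟩
  intro W _ _ G _ SA SB ℓ t ε Gp hε ht hSAne hSBne hdisj _ hdiam hadj hSAinv hSBinv htrans hbig hℓε
  have hs (a : Gp) (p : W × W) : a • p ∈ SA ×ˢ SB ↔ p ∈ SA ×ˢ SB := by
    simp only [mem_product]
    exact and_congr (hSAinv a a.2 p.1).symm (hSBinv a a.2 p.2).symm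
  obtain ⟨Ebad, hEbad, hcard, P, hvalid, hcong, hbad⟩ :=
    SimpleGraph.exists_low_congestion_walks (H := Gp) (fun a u v => (hadj a a.2 u v).symm) hs
      (fun e he e' he' => let ⟨g, hg, hge⟩ := htrans e he e' he'; ⟨⟨g, hg⟩, hge⟩)
      (fun p hp => hdiam p.1 (mem_product.1 hp).1 p.2 (mem_product.1 hp).2) t
  obtain ⟨u, hu⟩ := hSAne
  obtain ⟨v, hv⟩ := hSBne
  obtain ⟨w, -⟩ := hdiam u hu v hv
  have hm : 0 < #G.edgeFinset :=
    (w.edgeFinset_nonempty fun huv => disjoint_left.1 hdisj hu (huv ▸ hv)).card_pos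
  rw [card_product] at hcard hbad
  rw [sq] at hbad
  refine ⟨Ebad, hEbad, ?_, P, fun u _ v _ w hw => hvalid u v w hw,
    fun e => by exact_mod_cast hcong e, ?_⟩
  · rw [le_div_iff₀ (Nat.cast_pos.2 ht)]
    exact_mod_cast (Nat.mul_comm _ _).trans_le hcard
  · have hbadR : (#G.edgeFinset * t : ℝ) * #{p ∈ SA ×ˢ SB | P p.1 p.2 = none} ≤
        (#SA * #SB * ℓ) * (#SA * #SB * ℓ) := by exact_mod_cast hbad
    have hX : (0 : ℝ) ≤ #SA * #SB * ℓ := by positivity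
    have hN : (#{p ∈ SA ×ˢ SB | P p.1 p.2 = none} : ℝ) ≤ #SA * #SB * ℓ * ε ^ 2 := by
      nlinarith [mul_le_mul_of_nonneg_left hbig hX, (by positivity : (0 : ℝ) < #G.edgeFinset * t)]
    nlinarith [mul_le_mul_of_nonneg_left hℓε (by positivity : (0 : ℝ) ≤ #SA * #SB * ε)]
end
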